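/- arXiv:2307.01997 — 4 statements merged into one kernel-verified Lean document; each statement's English description precedes it below -/
import Mathlib

section
/- Let K be a superalgebra whose largest purely even quotient K̄ = K/I_K is a field and whose ideal I_K is nilpotent. Then a K-supermodule V is free (has a homogeneous K-free basis) if and only if it is flat as a K-module. -/
/-!
Free modules are flat: modulo the relations defining `I ⊗_A V`, every tensor is a sum
`∑ yᵢ ⊗ bᵢ` over a basis `b`, which maps to `∑ yᵢ bᵢ`; this vanishes only if all `yᵢ` do.

Conversely, let `m` be the ideal generated by the odd part of `A`. Super-commutativity makes `m`
two-sided, and `A/m` is a division ring, so `V/mV` has a basis of images of homogeneous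
elements; lift them to homogeneous `vᵢ ∈ V`. As `m` is nilpotent, Nakayama's lemma shows that
the `vᵢ` generate `V`. If `∑ gᵢ vᵢ = 0` with all `gᵢ ∈ mⁿ`, flatness puts `∑ gᵢ ⊗ vᵢ` into the
relations of `mⁿ ⊗_A V`; these are killed by `x ⊗ v ↦ x · cᵢ(v mod mV) ∈ A/mⁿ⁺¹`, where `cᵢ` is
the `i`-th coordinate on `V/mV`, so `gᵢ ∈ mⁿ⁺¹`. By nilpotency all `gᵢ` vanish.
-/

open scoped TensorProduct

/-- The multiplication map `I ⊗[R] V → V` for an `R`-subspace `I` of `A`. -/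
noncomputable def mulTensor {R A V : Type*} [CommRing R] [Ring A] [Algebra R A]
    [AddCommGroup V] [Module R V] [Module A V] [IsScalarTower R A V]
    [SMulCommClass A R V] (I : Submodule R A) : (↥I ⊗[R] V) →ₗ[R] V :=
  TensorProduct.lift (((Algebra.lsmul R R V).toLinearMap).comp I.subtype)

/-- Flatness of a left module `V` over a possibly noncommutative ring `A` (an
`R`-algebra), via the ideal criterion: for every right ideal `I` of `A`, the kernel of
the multiplication map `I ⊗[R] V → V` is exactly the submodule of relations defining
`I ⊗_A V`; equivalently `I ⊗_A V → V` is injective for every right ideal `I`. -/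
def IsFlatOver (R : Type*) {A V : Type*} [CommRing R] [Ring A] [Algebra R A]
    [AddCommGroup V] [Module R V] [Module A V] [IsScalarTower R A V]
    [SMulCommClass A R V] : Prop :=
  ∀ I : Submodule R A, (∀ x ∈ I, ∀ a : A, x * a ∈ I) →
    ∀ z : ↥I ⊗[R] V, mulTensor I z = 0 →
      z ∈ Submodule.span R {w : ↥I ⊗[R] V |
        ∃ (x : ↥I) (a : A) (v : V) (h : (x : A) * a ∈ I),
          w = (⟨(x : A) * a, h⟩ : ↥I) ⊗ₜ[R] v - x ⊗ₜ[R] (a • v)}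

section TensorRelations

variable {R A V : Type*} [CommRing R] [Ring A] [Algebra R A] [AddCommGroup V] [Module R V]
  [Module A V]

/-- The relations of `IsFlatOver`: the quotient of `I ⊗[R] V` by them is `I ⊗_A V`. -/
def tensorRelations (I : Submodule R A) : Submodule R (↥I ⊗[R] V) :=
  Submodule.span R {w : ↥I ⊗[R] V |
    ∃ (x : ↥I) (a : A) (v : V) (h : (x : A) * a ∈ I),
      w = (⟨(x : A) * a, h⟩ : ↥I) ⊗ₜ[R] v - x ⊗ₜ[R] (a • v)}

theorem mkQ_tmul_smul {I : Submodule R A} (x : ↥I) (a : A) (v : V) (h : (x : A) * a ∈ I) :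
    (tensorRelations I).mkQ (x ⊗ₜ[R] (a • v)) =
      (tensorRelations I).mkQ ((⟨(x : A) * a, h⟩ : ↥I) ⊗ₜ[R] v) := by
  refine ((Submodule.Quotient.eq _).2 ?_).symm
  exact Submodule.subset_span ⟨x, a, v, h, rfl⟩

theorem exists_mkQ_eq_mkQ_sum_tmul_basis {I : Submodule R A}
    (hI : ∀ x ∈ I, ∀ a : A, x * a ∈ I) {ι : Type*} (b : Module.Basis ι A V)
    (z : ↥I ⊗[R] V) :
    ∃ f : ι →₀ ↥I, (tensorRelations I).mkQ z =
      (tensorRelations I).mkQ (f.sum fun i y => y ⊗ₜ[R] b i) := by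
  induction z using TensorProduct.induction_on with
  | zero => exact ⟨0, by simp⟩
  | tmul x v =>
    refine ⟨(b.repr v).mapRange (fun c => ⟨x * c, hI x x.2 c⟩) (by simp), ?_⟩
    have hv : x ⊗ₜ[R] v = (b.repr v).sum fun i c => x ⊗ₜ[R] (c • b i) := by
      conv_lhs => rw [← b.linearCombination_repr v]
      rw [Finsupp.linearCombination_apply, Finsupp.sum, TensorProduct.tmul_sum, Finsupp.sum]
    rw [Finsupp.sum_mapRange_index (by simp), hv, map_finsuppSum, map_finsuppSum]
    exact Finsupp.sum_congr fun i _ => mkQ_tmul_smul x _ _ _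
  | add z w hz hw =>
    obtain ⟨f, hf⟩ := hz
    obtain ⟨g, hg⟩ := hw
    refine ⟨f + g, ?_⟩
    rw [map_add, hf, hg, Finsupp.sum_add_index' (h := fun i y => y ⊗ₜ[R] b i)
      (fun _ => TensorProduct.zero_tmul _ _) (fun _ _ _ => TensorProduct.add_tmul _ _ _), map_add]

end TensorRelations

section IsFlatOver

variable {R A V : Type*} [CommRing R] [Ring A] [Algebra R A] [AddCommGroup V] [Module R V]
  [Module A V] [IsScalarTower R A V] [SMulCommClass A R V]

theorem mulTensor_tmul (I : Submodule R A) (x : ↥I) (v : V) :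
    mulTensor I (x ⊗ₜ[R] v) = (x : A) • v :=
  rfl

theorem tensorRelations_le_ker_mulTensor (I : Submodule R A) :
    tensorRelations I ≤ LinearMap.ker (mulTensor (V := V) I) := by
  refine Submodule.span_le.2 ?_
  rintro _ ⟨x, a, v, h, rfl⟩
  simp [mulTensor_tmul, mul_smul]

theorem isFlatOver_of_basis {ι : Type*} (b : Module.Basis ι A V) :
    IsFlatOver R (A := A) (V := V) := by
  intro I hI z hz
  obtain ⟨f, hf⟩ := exists_mkQ_eq_mkQ_sum_tmul_basis hI b z
  have hsum : Finsupp.linearCombination A b (f.mapRange (↑) rfl) = 0 := by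
    have hker := tensorRelations_le_ker_mulTensor I ((Submodule.Quotient.eq _).1 hf)
    rw [LinearMap.mem_ker, map_sub, hz, zero_sub, neg_eq_zero, Finsupp.sum, map_sum] at hker
    rw [Finsupp.linearCombination_apply, Finsupp.sum_mapRange_index (by simp)]
    exact hker
  have hf0 : f = 0 := by
    have h := b.linearIndependent.finsuppLinearCombination_injective (hsum.trans (map_zero _).symm)
    exact Finsupp.mapRange_injective _ rfl Subtype.val_injective (by simpa using h)
  rw [hf0, Finsupp.sum_zero_index, map_zero] at hf
  exact (Submodule.Quotient.mk_eq_zero _).1 hf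

end IsFlatOver

theorem Submodule.eq_top_of_isNilpotent_of_sup_smul_top_eq_top {A V : Type*} [Ring A]
    [AddCommGroup V] [Module A V] {m : Ideal A} (hm : IsNilpotent m) {P : Submodule A V}
    (h : P ⊔ m • ⊤ = ⊤) : P = ⊤ := by
  obtain ⟨N, hN⟩ := hm
  have hpow : ∀ n : ℕ, P ⊔ (m ^ n) • ⊤ = ⊤ := by
    intro n
    induction n with
    | zero => rw [Submodule.pow_zero, Ideal.one_eq_top, Submodule.top_smul, sup_top_eq]
    | succ n ih =>
      refine le_antisymm le_top ?_
      calc ⊤ = P ⊔ (m ^ n) • (P ⊔ m • ⊤) := by rw [h, ih]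
        _ ≤ P ⊔ (m ^ (n + 1)) • ⊤ := by
          rw [Submodule.smul_sup, Submodule.pow_succ, Submodule.mul_smul]
          exact sup_le le_sup_left (sup_le (le_sup_of_le_left Submodule.smul_le_right) le_sup_right)
  simpa [hN] using hpow N

theorem Ideal.ne_top_of_isNilpotent {A : Type*} [Ring A] [Nontrivial A] {m : Ideal A}
    (hm : IsNilpotent m) : m ≠ ⊤ := by
  rintro rfl
  obtain ⟨n, hn⟩ := hm
  rw [Ideal.top_pow, Submodule.zero_eq_bot] at hn
  exact top_ne_bot hn

section MulLeftQuot

variable {R A : Type*} [CommRing R] [Ring A] [Algebra R A]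

/-- Left multiplication by `x ∈ J`, which maps `m` into `J * m`. -/
noncomputable def mulLeftQuot (J m : Ideal A) :
    J.restrictScalars R →ₗ[R] A ⧸ m →ₗ[R] A ⧸ (J * m).restrictScalars R :=
  let mulLeft : J.restrictScalars R →ₗ[R]
      Submodule.compatibleMaps (m.restrictScalars R) ((J * m).restrictScalars R) :=
    LinearMap.codRestrict _ ((LinearMap.mul R A).comp (J.restrictScalars R).subtype)
      fun x y hy => by
        change (x : A) * y ∈ J * m
        exact Submodule.mul_mem_mul x.2 hy
  LinearMap.lcomp R _ (Submodule.Quotient.restrictScalarsEquiv R m).symm.toLinearMap ∘ₗ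
    Submodule.mapQLinear _ _ ∘ₗ mulLeft

theorem mulLeftQuot_mk (J m : Ideal A) (x : J.restrictScalars R) (a : A) :
    mulLeftQuot J m x (Submodule.Quotient.mk a) = Submodule.Quotient.mk ((x : A) * a) :=
  rfl

end MulLeftQuot

section Independence

variable {R A V : Type*} [CommRing R] [Ring A] [Algebra R A] [AddCommGroup V] [Module R V]
  [Module A V] [IsScalarTower R A V]

theorem tensorRelations_le_ker_lift_mulLeftQuot (J m : Ideal A) (f : V →ₗ[A] A ⧸ m) :
    tensorRelations (J.restrictScalars R) ≤
      LinearMap.ker (TensorProduct.lift ((mulLeftQuot J m).compl₂ (f.restrictScalars R))) := by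
  refine Submodule.span_le.2 ?_
  rintro _ ⟨x, a, v, h, rfl⟩
  simp only [SetLike.mem_coe, LinearMap.mem_ker, map_sub, TensorProduct.lift.tmul,
    LinearMap.compl₂_apply, LinearMap.coe_restrictScalars, map_smul]
  induction f v using Submodule.Quotient.induction_on with
  | H c => rw [← Submodule.Quotient.mk_smul, mulLeftQuot_mk, mulLeftQuot_mk, smul_eq_mul,
      mul_assoc, sub_self]

variable [SMulCommClass A R V]

theorem mem_mul_of_sum_smul_eq_zero (hflat : IsFlatOver R (A := A) (V := V))
    (J m : Ideal A) [J.IsTwoSided] {ι : Type*} [DecidableEq ι] {v : ι → V}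
    (f : ι → V →ₗ[A] A ⧸ m)
    (hf : ∀ i j, f i (v j) = if j = i then 1 else 0) {s : Finset ι} {g : ι → A}
    (hg : ∀ j ∈ s, g j ∈ J) (hsum : ∑ j ∈ s, g j • v j = 0) {i : ι} (hi : i ∈ s) :
    g i ∈ J * m := by
  let z : J.restrictScalars R ⊗[R] V :=
    ∑ j : s, (⟨g j, hg j j.2⟩ : J.restrictScalars R) ⊗ₜ v j
  have hz : mulTensor _ z = 0 := by
    simpa [z, mulTensor_tmul, Finset.sum_attach s fun j => g j • v j] using hsum
  have hrel := hflat _ (fun x hx a => J.mul_mem_right a hx) z hz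
  have hφ := tensorRelations_le_ker_lift_mulLeftQuot (R := R) J m (f i) hrel
  have hdelta : ∀ (j : ι) (x : J.restrictScalars R),
      mulLeftQuot J m x (if j = i then 1 else 0) =
        if j = i then Submodule.Quotient.mk (x : A) else 0 := by
    intro j x
    split_ifs
    · exact (mulLeftQuot_mk J m x 1).trans (by rw [mul_one])
    · exact map_zero _
  simp only [z, LinearMap.mem_ker, map_sum, TensorProduct.lift.tmul, LinearMap.compl₂_apply,
    LinearMap.coe_restrictScalars, hf, hdelta] at hφ
  rw [Finset.sum_coe_sort s fun j => if j = i then Submodule.Quotient.mk (g j) else 0,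
    Finset.sum_ite_eq' s i, if_pos hi] at hφ
  exact (Submodule.Quotient.mk_eq_zero _).1 hφ

theorem linearIndependent_of_isFlatOver (hflat : IsFlatOver R (A := A) (V := V))
    {m : Ideal A} [m.IsTwoSided] (hm : IsNilpotent m) {ι : Type*} [DecidableEq ι] {v : ι → V}
    (f : ι → V →ₗ[A] A ⧸ m) (hf : ∀ i j, f i (v j) = if j = i then 1 else 0) :
    LinearIndependent A v := by
  obtain ⟨N, hN⟩ := hm
  refine linearIndependent_iff'.2 fun s g hsum i hi => ?_
  have hpow : ∀ n, ∀ j ∈ s, g j ∈ m ^ n := by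
    intro n
    induction n with
    | zero => simp [Submodule.pow_zero, Ideal.one_eq_top]
    | succ n ih =>
      intro j hj
      rw [Submodule.pow_succ]
      exact mem_mul_of_sum_smul_eq_zero hflat _ m f hf ih hsum hj
  simpa [hN] using hpow N i hi

end Independence

theorem sup_smul_top_eq_top_iff_span_image_mkQ {A V : Type*} [Ring A] [AddCommGroup V]
    [Module A V] (m : Ideal A) [m.IsTwoSided] (s : Set V) :
    Submodule.span A s ⊔ m • ⊤ = ⊤ ↔
      Submodule.span (A ⧸ m) ((m • ⊤ : Submodule A V).mkQ '' s) = ⊤ := by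
  let π : V →ₛₗ[Ideal.Quotient.mk m] V ⧸ (m • ⊤ : Submodule A V) :=
    ⟨(m • ⊤ : Submodule A V).mkQ.toAddHom, fun _ _ => rfl⟩
  rw [sup_comm, ← Submodule.map_mkQ_eq_top]
  change _ ↔ Submodule.span (A ⧸ m) (π '' s) = ⊤
  rw [← Submodule.map_span π s, Submodule.eq_top_iff', Submodule.eq_top_iff']
  rfl

section Basis

variable {R A V : Type*} [CommRing R] [Ring A] [Algebra R A] [AddCommGroup V] [Module R V]
  [Module A V] [IsScalarTower R A V] [SMulCommClass A R V]

theorem exists_basis_of_isFlatOver_of_mkQ_eq (hflat : IsFlatOver R (A := A) (V := V))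
    {m : Ideal A} [m.IsTwoSided] (hm : IsNilpotent m) {ι : Type*}
    (b : Module.Basis ι (A ⧸ m) (V ⧸ (m • ⊤ : Submodule A V))) (v : ι → V)
    (hv : ∀ i, Submodule.Quotient.mk (v i) = b i) :
    ∃ b' : Module.Basis ι A V, ⇑b' = v := by
  classical
  have hli : LinearIndependent A v :=
    linearIndependent_of_isFlatOver hflat hm
      (fun i => ((b.coord i).restrictScalars A).comp (m • ⊤ : Submodule A V).mkQ)
      (by intro i j; simp [hv, Finsupp.single_apply])
  have hspan : Submodule.span A (Set.range v) = ⊤ := by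
    refine Submodule.eq_top_of_isNilpotent_of_sup_smul_top_eq_top hm
      ((sup_smul_top_eq_top_iff_span_image_mkQ m _).2 ?_)
    rw [← Set.range_comp, ← b.span_eq]
    congr 1
    ext
    simp [hv]
  exact ⟨Module.Basis.mk hli hspan.ge, Module.Basis.coe_mk _ _⟩

theorem exists_basis_subset_of_isFlatOver (hflat : IsFlatOver R (A := A) (V := V))
    {m : Ideal A} [m.IsTwoSided] (hm : IsNilpotent m) (hm_top : m ≠ ⊤)
    (hunit : ∀ c : A ⧸ m, IsUnit c ∨ c = 0) {S : Set V} (hS : Submodule.span A S = ⊤) :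
    ∃ s ⊆ S, ∃ b : Module.Basis s A V, ⇑b = Subtype.val := by
  have := Ideal.Quotient.nontrivial_iff.2 hm_top
  let := DivisionRing.ofIsUnitOrEqZero hunit
  obtain ⟨T, hTS, hTspan, hTli⟩ :=
    exists_linearIndependent (A ⧸ m) ((m • ⊤ : Submodule A V).mkQ '' S)
  have hT := (sup_smul_top_eq_top_iff_span_image_mkQ m S).1 (by rw [hS, top_sup_eq])
  let bT := Module.Basis.mk hTli (by rw [Subtype.range_coe, hTspan, hT])
  choose v hvS hv using fun t : T => hTS t.2
  obtain ⟨b, hb⟩ := exists_basis_of_isFlatOver_of_mkQ_eq hflat hm bT v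
    fun t => (hv t).trans (Module.Basis.mk_apply _ _ t).symm
  refine ⟨Set.range b, ?_, b.reindexRange, funext b.reindexRange_apply⟩
  rintro _ ⟨t, rfl⟩
  rw [hb]
  exact hvS t

end Basis

theorem Submodule.span_iUnion_eq_top_of_isInternal {R A M ι : Type*} [CommRing R] [Ring A]
    [Algebra R A] [AddCommGroup M] [Module R M] [Module A M] [IsScalarTower R A M]
    [DecidableEq ι] {ℳ : ι → Submodule R M} (h : DirectSum.IsInternal ℳ) :
    Submodule.span A (⋃ j, (ℳ j : Set M)) = ⊤ :=
  Submodule.span_eq_top_of_span_eq_top R _ _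
    ((Submodule.iSup_eq_span ℳ).symm.trans h.submodule_iSup_eq_top)

section Superalgebra

variable {R A : Type*} [CommRing R] [Ring A] [Algebra R A] {𝒜 : ZMod 2 → Submodule R A}

theorem exists_add_eq_of_isInternal {M : Type*} [AddCommGroup M] [Module R M]
    {ℳ : ZMod 2 → Submodule R M} (h : DirectSum.IsInternal ℳ) (x : M) :
    ∃ x₀ ∈ ℳ 0, ∃ x₁ ∈ ℳ 1, x₀ + x₁ = x := by
  have hsup : ⨆ i, ℳ i = ℳ 0 ⊔ ℳ 1 :=
    le_antisymm (iSup_le fun i => by fin_cases i; exacts [le_sup_left, le_sup_right])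
      (sup_le (le_iSup ℳ 0) (le_iSup ℳ 1))
  exact Submodule.mem_sup.1 (hsup ▸ h.submodule_iSup_eq_top ▸ Submodule.mem_top)

theorem isTwoSided_span_odd (hinternal : DirectSum.IsInternal 𝒜)
    (hcomm : ∀ {i j : ZMod 2} {a b : A}, a ∈ 𝒜 i → b ∈ 𝒜 j →
      a * b = ((-1 : R) ^ (i.val * j.val)) • (b * a)) :
    (Ideal.span (𝒜 1 : Set A)).IsTwoSided := by
  refine ⟨fun b ha => ?_⟩
  induction ha using Submodule.span_induction with
  | mem x hx =>
    obtain ⟨b₀, hb₀, b₁, hb₁, rfl⟩ := exists_add_eq_of_isInternal hinternal b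
    have hxm : x ∈ Ideal.span (𝒜 1 : Set A) := Ideal.subset_span hx
    rw [mul_add, hcomm hx hb₀, hcomm hx hb₁]
    exact add_mem (Submodule.smul_of_tower_mem _ _ (Ideal.mul_mem_left _ _ hxm))
      (Submodule.smul_of_tower_mem _ _ (Ideal.mul_mem_left _ _ hxm))
  | zero => rw [zero_mul]; exact zero_mem _
  | add x y _ _ hx hy => rw [add_mul]; exact add_mem hx hy
  | smul c x _ hx => rw [smul_eq_mul, mul_assoc]; exact Ideal.mul_mem_left _ c hx

theorem isUnit_or_eq_zero_of_quotient_span_odd (hinternal : DirectSum.IsInternal 𝒜)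
    (hfield : ∀ a ∈ 𝒜 0, a ∉ Ideal.span (𝒜 1 : Set A) → IsUnit a)
    [(Ideal.span (𝒜 1 : Set A)).IsTwoSided] (c : A ⧸ Ideal.span (𝒜 1 : Set A)) :
    IsUnit c ∨ c = 0 := by
  obtain ⟨a, rfl⟩ := Ideal.Quotient.mk_surjective c
  obtain ⟨a₀, ha₀, a₁, ha₁, rfl⟩ := exists_add_eq_of_isInternal hinternal a
  rw [map_add, Ideal.Quotient.eq_zero_iff_mem.2 (Ideal.subset_span ha₁), add_zero,
    Ideal.Quotient.eq_zero_iff_mem]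
  by_cases h : a₀ ∈ Ideal.span (𝒜 1 : Set A)
  · exact Or.inr h
  · exact Or.inl ((hfield a₀ ha₀ h).map _)

end Superalgebra

theorem stmt2_general {R A V : Type*} [Field R] [Ring A] [Algebra R A]
    [AddCommGroup V] [Module R V] [Module A V] [IsScalarTower R A V]
    [SMulCommClass A R V]
    (𝒜 : ZMod 2 → Submodule R A)
    (hinternal : DirectSum.IsInternal 𝒜)
    (hcomm : ∀ {i j : ZMod 2} {a b : A}, a ∈ 𝒜 i → b ∈ 𝒜 j →
      a * b = ((-1 : R) ^ (i.val * j.val)) • (b * a))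
    -- `K̄ = K/I_K` is a field:
    (hnontriv : (1 : A) ≠ 0)
    (hfield : ∀ a ∈ 𝒜 0, a ∉ Ideal.span (𝒜 1 : Set A) → IsUnit a)
    -- `I_K` is nilpotent:
    (hnilp : IsNilpotent (Ideal.span (𝒜 1 : Set A)))
    -- `V` is a `K`-supermodule:
    (ℳ : ZMod 2 → Submodule R V)
    (hVinternal : DirectSum.IsInternal ℳ) :
    (∃ (s : Set V) (_ : Module.Basis s A V), ∀ x : s, ∃ j : ZMod 2, (x : V) ∈ ℳ j) ↔
      IsFlatOver R (A := A) (V := V) := by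
  refine ⟨fun ⟨_, b, _⟩ => isFlatOver_of_basis b, fun hflat => ?_⟩
  have := isTwoSided_span_odd hinternal hcomm
  have : Nontrivial A := ⟨⟨1, 0, hnontriv⟩⟩
  obtain ⟨s, hs, b, -⟩ := exists_basis_subset_of_isFlatOver hflat hnilp
    (Ideal.ne_top_of_isNilpotent hnilp) (isUnit_or_eq_zero_of_quotient_span_odd hinternal hfield)
    (Submodule.span_iUnion_eq_top_of_isInternal (A := A) hVinternal)
  exact ⟨s, b, fun x => Set.mem_iUnion.1 (hs x.2)⟩

theorem stmt2 {R A V : Type*} [Field R] [CharZero R] [Ring A] [Algebra R A]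
    [AddCommGroup V] [Module R V] [Module A V] [IsScalarTower R A V]
    [SMulCommClass A R V]
    (𝒜 : ZMod 2 → Submodule R A)
    (hinternal : DirectSum.IsInternal 𝒜)
    (hone : (1 : A) ∈ 𝒜 0)
    (hmul : ∀ {i j : ZMod 2} {a b : A}, a ∈ 𝒜 i → b ∈ 𝒜 j → a * b ∈ 𝒜 (i + j))
    (hcomm : ∀ {i j : ZMod 2} {a b : A}, a ∈ 𝒜 i → b ∈ 𝒜 j →
      a * b = ((-1 : R) ^ (i.val * j.val)) • (b * a))
    -- `K̄ = K/I_K` is a field: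
    (hnontriv : (1 : A) ≠ 0)
    (hfield : ∀ a ∈ 𝒜 0, a ∉ Ideal.span (𝒜 1 : Set A) → IsUnit a)
    -- `I_K` is nilpotent:
    (hnilp : IsNilpotent (Ideal.span (𝒜 1 : Set A)))
    -- `V` is a `K`-supermodule:
    (ℳ : ZMod 2 → Submodule R V)
    (hVinternal : DirectSum.IsInternal ℳ)
    (hsmul : ∀ {i j : ZMod 2} {a : A} {v : V}, a ∈ 𝒜 i → v ∈ ℳ j → a • v ∈ ℳ (i + j)) :
    (∃ (s : Set V) (_ : Module.Basis s A V), ∀ x : s, ∃ j : ZMod 2, (x : V) ∈ ℳ j) ↔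
      IsFlatOver R (A := A) (V := V) :=
  stmt2_general 𝒜 hinternal hcomm hnontriv hfield hnilp ℳ hVinternal
end

section
/- Let W be a purely odd finite-dimensional vector space over a field R of characteristic zero with dim W = d ≥ 3, let L = ∧(W) be the exterior algebra regarded as a superalgebra, and let K = ∧^0(W) ⊕ ∧^d(W) ⊆ L. Then K is a sub-superalgebra, both K and L are SUSY fields, and L is not flat as a K-module. -/
open scoped TensorProduct

/-- Helper instance (the self-module structure of the exterior algebra), to guide
typeclass resolution. -/
instance instModSelfExt {R W : Type*} [CommRing R] [AddCommGroup W] [Module R W] :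
    Module (ExteriorAlgebra R W) (ExteriorAlgebra R W) :=
  Semiring.toModule

/-!
Write `V = range ι`, so that `∧(W) = ⨁ₙ Vⁿ` with `Vⁿ = 0` for `n > d`. Both algebras are local with
nilpotent maximal ideal: every element of `L` is a scalar plus an element of `⨆ₙ Vⁿ⁺¹`, whose
`(d+1)`-st power vanishes, and `K = R ⊕ Vᵈ` with `Vᵈ · Vᵈ = 0`. For non-flatness take `0 ≠ ω ∈ Vᵈ`
and `w ≠ 0`. Over the right ideal `Vᵈ` of `K`, the tensor `ω ⊗ ι w` is killed by multiplication,
as `ω ι w ∈ Vᵈ⁺¹ = 0`. If `f` is a functional on `Vᵈ` with `f ω = 1`, then `f ⊗ id` maps every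
relation `xa ⊗ v - x ⊗ av` into `Vᵈ` (because `xa = r x` for `a = r + p`), but sends `ω ⊗ ι w` to
`ι w`, which is not in `Vᵈ` since `d ≠ 1`.
-/

section SubmoduleFiltration

variable {R A : Type*} [CommSemiring R] [Semiring A] [Algebra R A]

theorem Submodule.mem_one_sup {P : Submodule R A} {a : A} :
    a ∈ 1 ⊔ P ↔ ∃ r : R, ∃ p ∈ P, algebraMap R A r + p = a := by
  simp only [Submodule.mem_sup, Submodule.mem_one, exists_exists_eq_and]

theorem Algebra.toSubmodule_adjoin_eq_one_sup {P : Submodule R A} (hP : P * P ≤ P) :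
    Subalgebra.toSubmodule (Algebra.adjoin R (P : Set A)) = 1 ⊔ P := by
  have hmul : (1 ⊔ P) * (1 ⊔ P) ≤ 1 ⊔ P := by
    simp only [Submodule.mul_sup, Submodule.sup_mul, Submodule.one_mul, Submodule.mul_one]
    exact sup_le (sup_le le_sup_left le_sup_right) (sup_le le_sup_right (hP.trans le_sup_right))
  refine le_antisymm ?_ (sup_le ?_ fun x hx => Algebra.subset_adjoin hx)
  · have h1 : (1 : A) ∈ (1 ⊔ P : Submodule R A) :=
      Submodule.mem_sup_left (Submodule.one_le.mp le_rfl)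
    exact Algebra.adjoin_le (S := (1 ⊔ P).toSubalgebra h1
      fun x y hx hy => hmul (Submodule.mul_mem_mul hx hy)) fun x hx => Submodule.mem_sup_right hx
  · rw [← Algebra.toSubmodule_bot]
    exact Subalgebra.toSubmodule.monotone bot_le

variable (V : Submodule R A)

theorem Submodule.iSup_pow_add_mul_iSup_pow_add_le (k l : ℕ) :
    (⨆ n, V ^ (n + k)) * (⨆ n, V ^ (n + l)) ≤ ⨆ n, V ^ (n + (k + l)) := by
  rw [Submodule.iSup_mul]
  refine iSup_le fun m => ?_
  rw [Submodule.mul_iSup]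
  refine iSup_le fun n => ?_
  rw [← pow_add]
  exact le_iSup_of_le (m + n) (le_of_eq (by ring_nf))

theorem Submodule.iSup_pow_succ_pow_le (k : ℕ) :
    (⨆ n, V ^ (n + 1)) ^ k ≤ ⨆ n, V ^ (n + k) := by
  induction k with
  | zero => exact le_iSup_of_le 0 le_rfl
  | succ k ih =>
    rw [pow_succ]
    exact (mul_le_mul_left ih _).trans (V.iSup_pow_add_mul_iSup_pow_add_le k 1)

theorem Submodule.isNilpotent_of_mem_iSup_pow_succ {d : ℕ} (hV : V ^ (d + 1) = ⊥) {x : A}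
    (hx : x ∈ ⨆ n, V ^ (n + 1)) : IsNilpotent x := by
  refine ⟨d + 1, ?_⟩
  have hbot : (⨆ n, V ^ (n + 1)) ^ (d + 1) = ⊥ := by
    refine le_bot_iff.mp ((V.iSup_pow_succ_pow_le (d + 1)).trans (iSup_le fun n => ?_))
    rw [pow_add, hV, Submodule.mul_bot]
  simpa [hbot] using Submodule.pow_mem_pow _ hx (d + 1)

end SubmoduleFiltration

theorem one_notMem_span_of_forall_eq_zero {A B : Type*} [Semiring A] [Semiring B]
    [Nontrivial B] (f : A →+* B) {s : Set A} (hs : ∀ x ∈ s, f x = 0) :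
    (1 : A) ∉ Ideal.span s := fun h =>
  one_ne_zero ((map_one f).symm.trans ((Ideal.span_le (I := RingHom.ker f)).mpr hs h))

section SquareZero

variable {R A : Type*} [Field R] [Ring A] [Algebra R A]

theorem isUnit_algebraMap_add_of_isNilpotent {r : R} (hr : r ≠ 0) {n : A}
    (hn : IsNilpotent n) : IsUnit (algebraMap R A r + n) :=
  hn.isUnit_add_left_of_commute (hr.isUnit.map _) (Algebra.commutes r n).symm

theorem Algebra.isUnit_of_notMem_of_mul_self_eq_bot {P : Submodule R A} (hP : P * P = ⊥)
    (a : Algebra.adjoin R (P : Set A)) (ha : (a : A) ∉ P) : IsUnit a := by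
  have haP : (a : A) ∈ 1 ⊔ P := by
    rw [← Algebra.toSubmodule_adjoin_eq_one_sup (hP.le.trans bot_le)]
    exact a.2
  obtain ⟨r, p, hp, hrp⟩ := Submodule.mem_one_sup.mp haP
  have hr : r ≠ 0 := by
    rintro rfl
    rw [map_zero, zero_add] at hrp
    exact ha (hrp ▸ hp)
  have ha_eq : a = algebraMap R _ r + ⟨p, Algebra.subset_adjoin hp⟩ := Subtype.ext hrp.symm
  have hpp : p * p = 0 := by simpa [hP] using Submodule.mul_mem_mul hp hp
  rw [ha_eq]
  exact isUnit_algebraMap_add_of_isNilpotent hr ⟨2, Subtype.ext (by simp [pow_two, hpp])⟩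

end SquareZero

theorem not_isFlatOver_of_lift_notMem {R A V : Type*} [CommRing R] [Ring A] [Algebra R A]
    [AddCommGroup V] [Module R V] [Module A V] [IsScalarTower R A V] [SMulCommClass A R V]
    (I : Submodule R A) (hI : ∀ x ∈ I, ∀ a : A, x * a ∈ I) (f : I →ₗ[R] R) (N : Submodule R V)
    (hN : ∀ (x : I) (a : A) (v : V) (h : (x : A) * a ∈ I), f ⟨_, h⟩ • v - f x • a • v ∈ N)
    (z : I ⊗[R] V) (hz : mulTensor I z = 0)
    (hzN : TensorProduct.lift ((LinearMap.lsmul R V).comp f) z ∉ N) :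
    ¬ IsFlatOver R (A := A) (V := V) := by
  intro hflat
  refine hzN ((Submodule.span_le (p := N.comap _)).mpr ?_ (hflat I hI z hz))
  rintro _ ⟨x, a, v, h, rfl⟩
  simpa using hN x a v h

namespace ExteriorAlgebra

section CommRing

variable {R W : Type*} [CommRing R] [AddCommGroup W] [Module R W]

theorem algebraMapInv_ι (w : W) : algebraMapInv (ι R w) = 0 := by
  simp [algebraMapInv]

theorem algebraMapInv_eq_zero_of_mem_range_ι_pow {n : ℕ} (hn : n ≠ 0) {x : ExteriorAlgebra R W}
    (hx : x ∈ LinearMap.range (ι R) ^ n) : algebraMapInv x = 0 := by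
  obtain ⟨m, rfl⟩ := Nat.exists_eq_succ_of_ne_zero hn
  rw [pow_succ] at hx
  refine Submodule.mul_induction_on hx ?_ fun x y hx hy => by rw [map_add, hx, hy, add_zero]
  rintro a - _ ⟨w, rfl⟩
  rw [map_mul, algebraMapInv_ι, mul_zero]

theorem iSup_range_ι_pow_eq_top :
    ⨆ n, LinearMap.range (ι R (M := W)) ^ n = ⊤ :=
  CliffordAlgebra.iSup_ι_range_eq_top 0

theorem one_sup_iSup_range_ι_pow_succ :
    1 ⊔ ⨆ n, LinearMap.range (ι R (M := W)) ^ (n + 1) = ⊤ := by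
  rw [← pow_zero (LinearMap.range (ι R (M := W))),
    sup_iSup_nat_succ fun n => LinearMap.range (ι R (M := W)) ^ n, iSup_range_ι_pow_eq_top]

theorem iSup_range_ι_pow_succ_le_span :
    ⨆ n, LinearMap.range (ι R (M := W)) ^ (n + 1) ≤
      (Ideal.span (Set.range (ι R (M := W)))).restrictScalars R :=
  iSup_le fun n => by
    rw [pow_succ, Submodule.mul_le]
    exact fun a _ b hb => Ideal.mul_mem_left _ a (Ideal.subset_span hb)

theorem ι_notMem_range_ι_pow {w : W} (hw : w ≠ 0) {n : ℕ} (hn : n ≠ 1) :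
    ι R w ∉ LinearMap.range (ι R (M := W)) ^ n := fun h => by
  have hdisj := (DirectSum.Decomposition.isInternal
    (fun i : ℕ => ⋀[R]^i W)).submodule_iSupIndep.pairwiseDisjoint (Ne.symm hn)
  refine (ι_eq_zero_iff w).not.mpr hw (Submodule.disjoint_def.mp hdisj _ ?_ h)
  show ι R w ∈ LinearMap.range (ι R) ^ 1
  rw [pow_one]
  exact LinearMap.mem_range_self _ w

end CommRing

section FiniteDimensional

variable {R W : Type*} [Field R] [AddCommGroup W] [Module R W] [FiniteDimensional R W]

instance : Module.Finite R (ExteriorAlgebra R W) :=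
  Module.Finite.of_basis (Module.finBasis R W).ExteriorAlgebra

theorem range_ι_pow_eq_bot {n : ℕ} (hn : Module.finrank R W < n) :
    LinearMap.range (ι R (M := W)) ^ n = ⊥ := by
  rw [← Submodule.finrank_eq_zero]
  exact (exteriorPower.finrank_eq R n).trans (Nat.choose_eq_zero_of_lt hn)

theorem range_ι_pow_mul_range_ι_pow {m n : ℕ} (h : Module.finrank R W < m + n) :
    LinearMap.range (ι R (M := W)) ^ m * LinearMap.range (ι R (M := W)) ^ n = ⊥ := by
  rw [← pow_add, range_ι_pow_eq_bot h]

theorem range_ι_pow_finrank_ne_bot :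
    LinearMap.range (ι R (M := W)) ^ Module.finrank R W ≠ ⊥ := by
  rw [Ne, ← Submodule.finrank_eq_zero]
  exact ((exteriorPower.finrank_eq R _).trans (Nat.choose_self _)).trans_ne one_ne_zero

theorem range_ι_pow_finrank_mul_top_le :
    LinearMap.range (ι R (M := W)) ^ Module.finrank R W * ⊤ ≤
      LinearMap.range (ι R (M := W)) ^ Module.finrank R W := by
  rw [← iSup_range_ι_pow_eq_top, Submodule.mul_iSup]
  refine iSup_le fun n => ?_
  rcases n with _ | n
  · rw [pow_zero, Submodule.mul_one]
  · rw [← pow_add, range_ι_pow_eq_bot (by omega)]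
    exact bot_le

theorem isUnit_of_notMem_span_range_ι {a : ExteriorAlgebra R W}
    (ha : a ∉ Ideal.span (Set.range (ι R (M := W)))) : IsUnit a := by
  have hmem : a ∈ 1 ⊔ ⨆ n, LinearMap.range (ι R (M := W)) ^ (n + 1) := by
    rw [one_sup_iSup_range_ι_pow_succ]
    exact Submodule.mem_top
  obtain ⟨r, p, hp, rfl⟩ := Submodule.mem_one_sup.mp hmem
  have hr : r ≠ 0 := by
    rintro rfl
    rw [map_zero, zero_add] at ha
    exact ha (iSup_range_ι_pow_succ_le_span hp)
  exact isUnit_algebraMap_add_of_isNilpotent hr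
    (Submodule.isNilpotent_of_mem_iSup_pow_succ _ (range_ι_pow_eq_bot (Nat.lt_succ_self _)) hp)

theorem not_isFlatOver_adjoin_range_ι_pow_finrank (hd : 2 ≤ Module.finrank R W) :
    ¬ IsFlatOver R (A := Algebra.adjoin R ((LinearMap.range (ι R (M := W)) ^ Module.finrank R W :
      Submodule R (ExteriorAlgebra R W)) : Set (ExteriorAlgebra R W)))
      (V := ExteriorAlgebra R W) := by
  set P : Submodule R (ExteriorAlgebra R W) := LinearMap.range (ι R) ^ Module.finrank R W
  set K := Algebra.adjoin R (P : Set (ExteriorAlgebra R W))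
  have hPP : P * P = ⊥ := range_ι_pow_mul_range_ι_pow (by omega)
  let I : Submodule R K := P.comap K.val.toLinearMap
  obtain ⟨ω, hωP, hω⟩ := Submodule.exists_mem_ne_zero_of_ne_bot
    (range_ι_pow_finrank_ne_bot (R := R) (W := W))
  let x₀ : I := ⟨⟨ω, Algebra.subset_adjoin hωP⟩, hωP⟩
  obtain ⟨f, hf⟩ := Module.Projective.exists_dual_eq_one R (x := x₀)
    fun h => hω (congrArg (fun y : I => ((y : K) : ExteriorAlgebra R W)) h)
  have : Nontrivial W := Module.nontrivial_of_finrank_pos (R := R) (by omega)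
  obtain ⟨w, hw⟩ := exists_ne (0 : W)
  refine not_isFlatOver_of_lift_notMem I
    (fun x hx a => range_ι_pow_finrank_mul_top_le (Submodule.mul_mem_mul hx trivial)) f P ?_
    (x₀ ⊗ₜ ι R w) ?_ ?_
  · intro x a v h
    obtain ⟨r, p, hp, hrp⟩ := Submodule.mem_one_sup.mp <|
      (Algebra.toSubmodule_adjoin_eq_one_sup (hPP.le.trans bot_le)).le a.2
    have hxp : ((x : K) : ExteriorAlgebra R W) * p = 0 := by
      have hxP : ((x : K) : ExteriorAlgebra R W) ∈ P := x.2
      simpa [hPP] using Submodule.mul_mem_mul hxP hp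
    have hxa : (⟨x * a, h⟩ : I) = r • x := by
      refine Subtype.ext (Subtype.ext ?_)
      simp [← hrp, mul_add, hxp, Algebra.commutes, Algebra.smul_def]
    have hav : a • v = r • v + p * v := by
      show (a : ExteriorAlgebra R W) * v = _
      rw [← hrp, add_mul, Algebra.smul_def]
    rw [hxa, map_smul, hav, smul_add, smul_smul, smul_eq_mul, mul_comm, ← smul_smul,
      sub_add_cancel_left]
    exact P.neg_mem <| P.smul_mem _ <|
      range_ι_pow_finrank_mul_top_le (Submodule.mul_mem_mul hp trivial)
  · have h : ω * ι R w ∈ LinearMap.range (ι R (M := W)) ^ (Module.finrank R W + 1) := by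
      rw [pow_succ]
      exact Submodule.mul_mem_mul hωP (LinearMap.mem_range_self _ w)
    rw [range_ι_pow_eq_bot (Nat.lt_succ_self _)] at h
    exact h
  · simpa [hf] using ι_notMem_range_ι_pow hw (by omega)

end FiniteDimensional

end ExteriorAlgebra

theorem stmt3_general {R W : Type*} [Field R]
    [AddCommGroup W] [Module R W] [FiniteDimensional R W]
    (d : ℕ) (hd : 3 ≤ d) (hdim : Module.finrank R W = d) :
    ∀ (K : Subalgebra R (ExteriorAlgebra R W)),
      K = Algebra.adjoin R
        ((LinearMap.range (ExteriorAlgebra.ι R (M := W)) ^ d :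
          Submodule R (ExteriorAlgebra R W)) : Set (ExteriorAlgebra R W)) →
      -- `K` is the sub-superalgebra `∧⁰(W) ⊕ ∧ᵈ(W)`:
      (Subalgebra.toSubmodule K =
        (1 : Submodule R (ExteriorAlgebra R W)) ⊔
          LinearMap.range (ExteriorAlgebra.ι R (M := W)) ^ d) ∧
      -- `L` is a SUSY field:
      IsNoetherianRing (ExteriorAlgebra R W) ∧
      ((1 : ExteriorAlgebra R W) ∉
          Ideal.span (Set.range (ExteriorAlgebra.ι R (M := W)))) ∧
      (∀ a : ExteriorAlgebra R W,
        a ∉ Ideal.span (Set.range (ExteriorAlgebra.ι R (M := W))) → IsUnit a) ∧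
      -- `K` is a SUSY field:
      IsNoetherianRing K ∧
      ((1 : K) ∉ Ideal.span {x : K |
          (x : ExteriorAlgebra R W) ∈
            (LinearMap.range (ExteriorAlgebra.ι R (M := W)) ^ d :
              Submodule R (ExteriorAlgebra R W))}) ∧
      (∀ a : K, a ∉ Ideal.span {x : K |
          (x : ExteriorAlgebra R W) ∈
            (LinearMap.range (ExteriorAlgebra.ι R (M := W)) ^ d :
              Submodule R (ExteriorAlgebra R W))} → IsUnit a) ∧
      -- `L` is not flat as a `K`-module:
      ¬ IsFlatOver R (A := ↥K) (V := ExteriorAlgebra R W) := by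
  intro K hK
  subst hK hdim
  have hPP := ExteriorAlgebra.range_ι_pow_mul_range_ι_pow (R := R) (W := W)
    (m := Module.finrank R W) (n := Module.finrank R W) (by omega)
  refine ⟨Algebra.toSubmodule_adjoin_eq_one_sup (hPP.le.trans bot_le),
    IsNoetherianRing.of_finite R _, ?_, fun _ => ExteriorAlgebra.isUnit_of_notMem_span_range_ι,
    IsNoetherianRing.of_finite R _, ?_,
    fun a ha => Algebra.isUnit_of_notMem_of_mul_self_eq_bot hPP a (ha <| Ideal.subset_span ·),
    ExteriorAlgebra.not_isFlatOver_adjoin_range_ι_pow_finrank (by omega)⟩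
  · refine one_notMem_span_of_forall_eq_zero (ExteriorAlgebra.algebraMapInv (M := W)).toRingHom ?_
    rintro _ ⟨w, rfl⟩
    exact ExteriorAlgebra.algebraMapInv_ι w
  · refine one_notMem_span_of_forall_eq_zero
      ((ExteriorAlgebra.algebraMapInv (M := W)).comp (Algebra.adjoin R _).val).toRingHom ?_
    exact fun x hx => ExteriorAlgebra.algebraMapInv_eq_zero_of_mem_range_ι_pow (by omega) hx

theorem stmt3 {R W : Type*} [Field R] [CharZero R]
    [AddCommGroup W] [Module R W] [FiniteDimensional R W]
    (d : ℕ) (hd : 3 ≤ d) (hdim : Module.finrank R W = d) :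
    ∀ (K : Subalgebra R (ExteriorAlgebra R W)),
      K = Algebra.adjoin R
        ((LinearMap.range (ExteriorAlgebra.ι R (M := W)) ^ d :
          Submodule R (ExteriorAlgebra R W)) : Set (ExteriorAlgebra R W)) →
      -- `K` is the sub-superalgebra `∧⁰(W) ⊕ ∧ᵈ(W)`:
      (Subalgebra.toSubmodule K =
        (1 : Submodule R (ExteriorAlgebra R W)) ⊔
          LinearMap.range (ExteriorAlgebra.ι R (M := W)) ^ d) ∧
      -- `L` is a SUSY field:
      IsNoetherianRing (ExteriorAlgebra R W) ∧
      ((1 : ExteriorAlgebra R W) ∉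
          Ideal.span (Set.range (ExteriorAlgebra.ι R (M := W)))) ∧
      (∀ a : ExteriorAlgebra R W,
        a ∉ Ideal.span (Set.range (ExteriorAlgebra.ι R (M := W))) → IsUnit a) ∧
      -- `K` is a SUSY field:
      IsNoetherianRing K ∧
      ((1 : K) ∉ Ideal.span {x : K |
          (x : ExteriorAlgebra R W) ∈
            (LinearMap.range (ExteriorAlgebra.ι R (M := W)) ^ d :
              Submodule R (ExteriorAlgebra R W))}) ∧
      (∀ a : K, a ∉ Ideal.span {x : K |
          (x : ExteriorAlgebra R W) ∈
            (LinearMap.range (ExteriorAlgebra.ι R (M := W)) ^ d :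
              Submodule R (ExteriorAlgebra R W))} → IsUnit a) ∧
      -- `L` is not flat as a `K`-module:
      ¬ IsFlatOver R (A := ↥K) (V := ExteriorAlgebra R W) :=
  stmt3_general d hd hdim
end

section
/- Let D be a Hopf superalgebra acting on a D-simple D-superalgebra A (A is nonzero and has no nontrivial D-stable super-ideal). Then the subalgebra of D-invariants A^D is a field contained in the even part A_0. -/
open scoped TensorProduct

universe u

/-- A ℤ/2-grading making the `R`-algebra `A` into a superalgebra
(not necessarily supercommutative). -/
structure SuperRing (R : Type u) [Field R] (A : Type u) [Ring A] [Algebra R A] where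
  grade : ZMod 2 → Submodule R A
  internal : DirectSum.IsInternal grade
  one_mem : (1 : A) ∈ grade 0
  mul_mem : ∀ {i j : ZMod 2} {a b : A}, a ∈ grade i → b ∈ grade j → a * b ∈ grade (i + j)

/-- Super-commutativity of a superalgebra. -/
def SuperRing.SuperComm {R : Type u} [Field R] {A : Type u} [Ring A] [Algebra R A]
    (g : SuperRing R A) : Prop :=
  ∀ {i j : ZMod 2} {a b : A}, a ∈ g.grade i → b ∈ g.grade j →
    a * b = ((-1 : R) ^ (i.val * j.val)) • (b * a)

/-- A super-cocommutative Hopf superalgebra structure on the `R`-algebra `D`.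
Sign-sensitive axioms (super-cocommutativity, multiplicativity of the coproduct) are
expressed using arbitrary homogeneous finite representations of coproducts. -/
structure SuperHopf (R : Type u) [Field R] (D : Type u) [Ring D] [Algebra R D]
    extends SuperRing R D where
  comul : D →ₗ[R] D ⊗[R] D
  counit : D →ₗ[R] R
  coassoc : (TensorProduct.assoc R D D D).toLinearMap ∘ₗ
      (TensorProduct.map comul LinearMap.id) ∘ₗ comul
    = (TensorProduct.map LinearMap.id comul) ∘ₗ comul
  counit_comul_left : ∀ d : D,
    (TensorProduct.lid R D) ((TensorProduct.map counit LinearMap.id) (comul d)) = d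
  counit_comul_right : ∀ d : D,
    (TensorProduct.rid R D) ((TensorProduct.map LinearMap.id counit) (comul d)) = d
  comul_one : comul 1 = 1 ⊗ₜ[R] 1
  counit_one : counit 1 = 1
  comul_mul : ∀ (d d' : D) (ι κ : Type u) (s : Finset ι) (t : Finset κ)
    (x y : ι → D) (py : ι → ZMod 2) (w v : κ → D) (pw : κ → ZMod 2),
    (∀ i ∈ s, y i ∈ grade (py i)) → (∀ j ∈ t, w j ∈ grade (pw j)) →
    (∑ i ∈ s, x i ⊗ₜ[R] y i) = comul d → (∑ j ∈ t, w j ⊗ₜ[R] v j) = comul d' →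
    comul (d * d') = ∑ i ∈ s, ∑ j ∈ t,
      ((-1 : R) ^ ((py i).val * (pw j).val)) • ((x i * w j) ⊗ₜ[R] (y i * v j))
  counit_mul : ∀ d d' : D, counit (d * d') = counit d * counit d'
  comul_grade : ∀ (p : ZMod 2), ∀ d ∈ grade p, comul d ∈
    ⨆ q : ZMod 2, LinearMap.range
      (TensorProduct.map (grade q).subtype (grade (p - q)).subtype)
  counit_odd : ∀ d ∈ grade 1, counit d = 0
  cocomm : ∀ (d : D) (ι : Type u) (s : Finset ι) (x y : ι → D) (px py : ι → ZMod 2),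
    (∀ i ∈ s, x i ∈ grade (px i)) → (∀ i ∈ s, y i ∈ grade (py i)) →
    (∑ i ∈ s, x i ⊗ₜ[R] y i) = comul d →
    (∑ i ∈ s, ((-1 : R) ^ ((px i).val * (py i).val)) • (y i ⊗ₜ[R] x i)) = comul d
  antipode : D →ₗ[R] D
  antipode_left : ∀ d : D,
    (LinearMap.mul' R D) ((TensorProduct.map antipode LinearMap.id) (comul d))
      = counit d • 1
  antipode_right : ∀ d : D,
    (LinearMap.mul' R D) ((TensorProduct.map LinearMap.id antipode) (comul d))
      = counit d • 1

/-- A (left) action of the Hopf superalgebra `D` on the superalgebra `A`, making `A`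
a `D`-superalgebra, i.e. an algebra in the symmetric monoidal category of
`D`-supermodules; the Koszul sign in the multiplicativity axiom is expressed via
homogeneous representations of the coproduct. -/
structure SuperAction (R : Type u) [Field R] (D A : Type u) [Ring D] [Algebra R D]
    [Ring A] [Algebra R A] (H : SuperHopf R D) (g : SuperRing R A) where
  act : D →ₗ[R] A →ₗ[R] A
  act_one : act 1 = LinearMap.id
  act_mul : ∀ d d' : D, act (d * d') = act d ∘ₗ act d'
  act_grade : ∀ {p q : ZMod 2} {d : D} {a : A}, d ∈ H.grade p → a ∈ g.grade q →
    act d a ∈ g.grade (p + q)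
  act_algebra_one : ∀ d : D, act d (1 : A) = H.counit d • (1 : A)
  act_algebra_mul : ∀ (d : D) (a b : A) (p : ZMod 2), a ∈ g.grade p →
    ∀ (ι : Type u) (s : Finset ι) (x y : ι → D) (py : ι → ZMod 2),
    (∀ i ∈ s, y i ∈ H.grade (py i)) →
    (∑ i ∈ s, x i ⊗ₜ[R] y i) = H.comul d →
    act d (a * b) = ∑ i ∈ s,
      ((-1 : R) ^ (p.val * (py i).val)) • (act (x i) a * act (y i) b)

/-- The `D`-invariants `A^D` of a `D`-superalgebra. -/
def SuperAction.invariants {R : Type u} [Field R] {D A : Type u} [Ring D] [Algebra R D]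
    [Ring A] [Algebra R A] {H : SuperHopf R D} {g : SuperRing R A}
    (S : SuperAction R D A H g) : Submodule R A where
  carrier := {a : A | ∀ d : D, S.act d a = H.counit d • a}
  add_mem' := by
    intro a b ha hb
    intro d
    simp only [map_add, ha d, hb d, smul_add]
  zero_mem' := by intro d; simp
  smul_mem' := by
    intro r a ha
    intro d
    simp only [map_smul, ha d]
    rw [smul_comm]

/-- A homogeneous two-sided ideal (super-ideal). -/
def SuperRing.IsSuperIdeal {R : Type u} [Field R] {A : Type u} [Ring A] [Algebra R A]
    (g : SuperRing R A) (I : Submodule R A) : Prop :=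
  (∀ a : A, ∀ x ∈ I, a * x ∈ I) ∧ (∀ a : A, ∀ x ∈ I, x * a ∈ I) ∧
    I = (I ⊓ g.grade 0) ⊔ (I ⊓ g.grade 1)

/-- `D`-simplicity: `A ≠ 0` and `A` has no nontrivial `D`-stable super-ideal. -/
def SuperAction.IsSimple {R : Type u} [Field R] {D A : Type u} [Ring D] [Algebra R D]
    [Ring A] [Algebra R A] {H : SuperHopf R D} {g : SuperRing R A}
    (S : SuperAction R D A H g) : Prop :=
  (1 : A) ≠ 0 ∧ ∀ I : Submodule R A, g.IsSuperIdeal I →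
    (∀ d : D, ∀ x ∈ I, S.act d x ∈ I) → I = ⊥ ∨ I = ⊤

/-!
An invariant `a` satisfies `act d (x * a) = act d x * a`: in the Leibniz rule only the counit of
the right tensor factors of `Δ d` survives, and `∑ ε(d₍₂₎) d₍₁₎ = d`. Hence for a homogeneous
invariant `c` the left ideal `A c` is a `D`-stable super-ideal (two-sided by super-commutativity),
so `D`-simplicity makes `c` left invertible as soon as `c ≠ 0`. The homogeneous components of an
invariant are invariant; an odd one squares to zero (as `2` is invertible), so being left
invertible it must vanish. Thus invariants are even, hence central, and left inverses are inverses.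
-/

lemma zmod_two_eq_zero_or_one (i : ZMod 2) : i = 0 ∨ i = 1 := by
  revert i
  decide

namespace SuperRing

variable {R A : Type u} [Field R] [Ring A] [Algebra R A] (g : SuperRing R A)

lemma exists_add_eq (a : A) : ∃ a₀ ∈ g.grade 0, ∃ a₁ ∈ g.grade 1, a₀ + a₁ = a := by
  have hle : (⨆ i, g.grade i) ≤ g.grade 0 ⊔ g.grade 1 :=
    iSup_le fun i => by
      obtain rfl | rfl := zmod_two_eq_zero_or_one i
      · exact le_sup_left
      · exact le_sup_right
  have ha : a ∈ ⨆ i, g.grade i := by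
    rw [g.internal.submodule_iSup_eq_top]
    trivial
  exact Submodule.mem_sup.mp (hle ha)

lemma disjoint_grade_add_one (i : ZMod 2) : Disjoint (g.grade i) (g.grade (i + 1)) :=
  g.internal.submodule_iSupIndep.pairwiseDisjoint
    (by obtain rfl | rfl := zmod_two_eq_zero_or_one i <;> decide)

lemma add_eq_add_iff {i : ZMod 2} {u v u' v' : A} (hu : u ∈ g.grade i) (hv : v ∈ g.grade (i + 1))
    (hu' : u' ∈ g.grade i) (hv' : v' ∈ g.grade (i + 1)) :
    u + v = u' + v' ↔ u = u' ∧ v = v' := by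
  refine ⟨fun h => ?_, fun ⟨rfl, rfl⟩ => rfl⟩
  have hdiff : u - u' = v' - v := by rw [sub_eq_sub_iff_add_eq_add, h, add_comm]
  have hzero : u - u' = 0 :=
    Submodule.disjoint_def.mp (g.disjoint_grade_add_one i) _ (sub_mem hu hu')
      (hdiff ▸ sub_mem hv' hv)
  exact ⟨sub_eq_zero.mp hzero, (sub_eq_zero.mp (hdiff ▸ hzero)).symm⟩

lemma mem_sup_inf_grade {I : Submodule R A} {i : ZMod 2} {x : A} (hxI : x ∈ I)
    (hx : x ∈ g.grade i) : x ∈ (I ⊓ g.grade 0) ⊔ (I ⊓ g.grade 1) := by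
  obtain rfl | rfl := zmod_two_eq_zero_or_one i
  · exact Submodule.mem_sup_left ⟨hxI, hx⟩
  · exact Submodule.mem_sup_right ⟨hxI, hx⟩

variable {g}

lemma SuperComm.mul_comm_of_mem_grade_zero (hg : g.SuperComm) {a : A} (ha : a ∈ g.grade 0)
    (x : A) : a * x = x * a := by
  obtain ⟨x₀, hx₀, x₁, hx₁, rfl⟩ := g.exists_add_eq x
  rw [mul_add, add_mul, hg ha hx₀, hg ha hx₁]
  simp

lemma SuperComm.mul_self_eq_zero_of_mem_grade_one (hg : g.SuperComm) (h2 : (2 : R) ≠ 0)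
    {a : A} (ha : a ∈ g.grade 1) : a * a = 0 := by
  have hanti : a * a = -(a * a) := by simpa [ZMod.val_one] using hg ha ha
  have htwo : (2 : R) • (a * a) = 0 := by
    rw [two_smul]
    nth_rewrite 1 [hanti]
    exact neg_add_cancel _
  exact (smul_eq_zero.mp htwo).resolve_left h2

lemma SuperComm.isSuperIdeal_range_mulRight (hg : g.SuperComm) {q : ZMod 2} {c : A}
    (hc : c ∈ g.grade q) : g.IsSuperIdeal (LinearMap.range (LinearMap.mulRight R c)) := by
  have hmem : ∀ x : A, x * c ∈ LinearMap.range (LinearMap.mulRight R c) := fun x => ⟨x, rfl⟩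
  refine ⟨?_, ?_, ?_⟩
  · rintro a _ ⟨x, rfl⟩
    simpa [mul_assoc] using hmem (a * x)
  · rintro a _ ⟨x, rfl⟩
    have hhom : ∀ i, ∀ a ∈ g.grade i, x * c * a ∈ LinearMap.range (LinearMap.mulRight R c) := by
      intro i a ha
      rw [mul_assoc, hg hc ha, mul_smul_comm, ← mul_assoc]
      exact Submodule.smul_mem _ _ (hmem _)
    obtain ⟨a₀, ha₀, a₁, ha₁, rfl⟩ := g.exists_add_eq a
    simpa [mul_add] using add_mem (hhom 0 a₀ ha₀) (hhom 1 a₁ ha₁)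
  · refine le_antisymm ?_ (sup_le inf_le_left inf_le_left)
    rintro _ ⟨x, rfl⟩
    obtain ⟨x₀, hx₀, x₁, hx₁, rfl⟩ := g.exists_add_eq x
    simpa [add_mul] using add_mem (g.mem_sup_inf_grade (hmem x₀) (g.mul_mem hx₀ hc))
      (g.mem_sup_inf_grade (hmem x₁) (g.mul_mem hx₁ hc))

end SuperRing

namespace SuperHopf

variable {R D : Type u} [Field R] [Ring D] [Algebra R D] (H : SuperHopf R D)

lemma exists_sum_tmul_eq (t : D ⊗[R] D) :
    ∃ (ι : Type u) (s : Finset ι) (x y : ι → D) (py : ι → ZMod 2),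
      (∀ i ∈ s, y i ∈ H.grade (py i)) ∧ ∑ i ∈ s, x i ⊗ₜ[R] y i = t := by
  induction t using TensorProduct.induction_on with
  | zero => exact ⟨PEmpty, ∅, PEmpty.elim, PEmpty.elim, PEmpty.elim, by simp, by simp⟩
  | tmul x y =>
    obtain ⟨y₀, hy₀, y₁, hy₁, rfl⟩ := H.exists_add_eq y
    refine ⟨ULift Bool, Finset.univ, fun _ => x, fun i => bif i.down then y₁ else y₀,
      fun i => bif i.down then 1 else 0, ?_, ?_⟩
    · rintro ⟨_ | _⟩ _ <;> assumption
    · simp [Fintype.sum_equiv Equiv.ulift _ (fun b : Bool => x ⊗ₜ[R] bif b then y₁ else y₀),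
        TensorProduct.tmul_add, add_comm]
  | add t t' ih ih' =>
    obtain ⟨ι, s, x, y, py, hy, rfl⟩ := ih
    obtain ⟨κ, s', x', y', py', hy', rfl⟩ := ih'
    refine ⟨ι ⊕ κ, s.disjSum s', Sum.elim x x', Sum.elim y y', Sum.elim py py', ?_, ?_⟩
    · rintro (i | i) hi
      · exact hy i (Finset.inl_mem_disjSum.mp hi)
      · exact hy' i (Finset.inr_mem_disjSum.mp hi)
    · simp [Finset.sum_disjSum]

lemma sum_counit_smul_eq {d : D} {ι : Type u} {s : Finset ι} {x y : ι → D}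
    (h : ∑ i ∈ s, x i ⊗ₜ[R] y i = H.comul d) : ∑ i ∈ s, H.counit (y i) • x i = d := by
  simpa [← h, map_sum] using H.counit_comul_right d

lemma neg_one_pow_mul_counit {p : ZMod 2} {d : D} (hd : d ∈ H.grade p) (n : ℕ) :
    (-1 : R) ^ (n * p.val) * H.counit d = H.counit d := by
  obtain rfl | rfl := zmod_two_eq_zero_or_one p
  · simp
  · simp [H.counit_odd d hd]

end SuperHopf

namespace SuperAction

variable {R D A : Type u} [Field R] [Ring D] [Algebra R D] [Ring A] [Algebra R A]
  {H : SuperHopf R D} {g : SuperRing R A} (S : SuperAction R D A H g)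

lemma one_mem_invariants : (1 : A) ∈ S.invariants :=
  S.act_algebra_one

lemma act_mul_of_mem_invariants {a : A} (ha : a ∈ S.invariants) (d : D) (x : A) :
    S.act d (x * a) = S.act d x * a := by
  obtain ⟨ι, s, y, z, pz, hz, hrep⟩ := H.exists_sum_tmul_eq (H.comul d)
  have hhom : ∀ p, ∀ x ∈ g.grade p, S.act d (x * a) = S.act d x * a := by
    intro p x hx
    have hterm : ∀ i ∈ s, (-1 : R) ^ (p.val * (pz i).val) • (S.act (y i) x * S.act (z i) a)
        = H.counit (z i) • S.act (y i) x * a := fun i hi => by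
      rw [ha, mul_smul_comm, smul_smul, H.neg_one_pow_mul_counit (hz i hi), smul_mul_assoc]
    calc S.act d (x * a)
        = ∑ i ∈ s, (-1 : R) ^ (p.val * (pz i).val) • (S.act (y i) x * S.act (z i) a) :=
          S.act_algebra_mul d x a p hx ι s y z pz hz hrep
      _ = S.act (∑ i ∈ s, H.counit (z i) • y i) x * a := by
          simp [Finset.sum_congr rfl hterm, Finset.sum_mul, map_sum]
      _ = S.act d x * a := by rw [H.sum_counit_smul_eq hrep]
  obtain ⟨x₀, hx₀, x₁, hx₁, rfl⟩ := g.exists_add_eq x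
  rw [add_mul, map_add, map_add, hhom 0 x₀ hx₀, hhom 1 x₁ hx₁, add_mul]

lemma mul_mem_invariants {a b : A} (ha : a ∈ S.invariants) (hb : b ∈ S.invariants) :
    a * b ∈ S.invariants := fun d => by
  rw [S.act_mul_of_mem_invariants hb, ha d, smul_mul_assoc]

lemma mem_invariants_of_mul_eq_one {a b : A} (ha : a ∈ S.invariants) (hba : b * a = 1)
    (hab : a * b = 1) : b ∈ S.invariants := fun d =>
  calc S.act d b = S.act d (b * a) * b := by
        rw [S.act_mul_of_mem_invariants ha, mul_assoc, hab, mul_one]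
    _ = H.counit d • b := by rw [hba, S.act_algebra_one, smul_one_mul]

lemma mem_invariants_of_add_eq {a₀ a₁ : A} (ha₀ : a₀ ∈ g.grade 0) (ha₁ : a₁ ∈ g.grade 1)
    (ha : a₀ + a₁ ∈ S.invariants) : a₀ ∈ S.invariants ∧ a₁ ∈ S.invariants := by
  have hhom : ∀ p, ∀ d ∈ H.grade p, S.act d a₀ = H.counit d • a₀ ∧
      S.act d a₁ = H.counit d • a₁ := by
    intro p d hd
    -- `ε d • a` has the same degree as `act d a`, since `ε d = 0` when `d` is odd
    have hε : ∀ i, ∀ a ∈ g.grade i, H.counit d • a ∈ g.grade (p + i) := by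
      intro i a hai
      obtain rfl | rfl := zmod_two_eq_zero_or_one p
      · simpa using Submodule.smul_mem _ (H.counit d) hai
      · simp [H.counit_odd d hd]
    have hsplit := ha d
    rw [map_add, smul_add] at hsplit
    exact (g.add_eq_add_iff (S.act_grade hd ha₀) (add_assoc p 0 1 ▸ S.act_grade hd ha₁)
      (hε 0 a₀ ha₀) (add_assoc p 0 1 ▸ hε 1 a₁ ha₁)).mp hsplit
  have hall : ∀ d, S.act d a₀ = H.counit d • a₀ ∧ S.act d a₁ = H.counit d • a₁ := by
    intro d
    obtain ⟨d₀, hd₀, d₁, hd₁, rfl⟩ := H.exists_add_eq d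
    simp only [map_add, LinearMap.add_apply, add_smul, (hhom 0 d₀ hd₀).1, (hhom 0 d₀ hd₀).2,
      (hhom 1 d₁ hd₁).1, (hhom 1 d₁ hd₁).2, and_self]
  exact ⟨fun d => (hall d).1, fun d => (hall d).2⟩

variable {S}

lemma IsSimple.exists_mul_eq_one (hs : S.IsSimple) (hg : g.SuperComm) {q : ZMod 2} {c : A}
    (hc : c ∈ S.invariants) (hcq : c ∈ g.grade q) (hc0 : c ≠ 0) : ∃ b, b * c = 1 := by
  have hstable : ∀ d : D, ∀ x ∈ LinearMap.range (LinearMap.mulRight R c),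
      S.act d x ∈ LinearMap.range (LinearMap.mulRight R c) := by
    rintro d _ ⟨x, rfl⟩
    exact ⟨S.act d x, (S.act_mul_of_mem_invariants hc d x).symm⟩
  rcases hs.2 _ (hg.isSuperIdeal_range_mulRight hcq) hstable with hbot | htop
  · have hcI : c ∈ LinearMap.range (LinearMap.mulRight R c) := ⟨1, one_mul c⟩
    exact absurd (by simpa [hbot] using hcI) hc0
  · exact (LinearMap.range_eq_top.mp htop) 1

lemma IsSimple.invariants_le_grade_zero (hs : S.IsSimple) (hg : g.SuperComm)
    (h2 : (2 : R) ≠ 0) : S.invariants ≤ g.grade 0 := by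
  intro a ha
  obtain ⟨a₀, ha₀, a₁, ha₁, rfl⟩ := g.exists_add_eq a
  obtain ⟨-, hinv₁⟩ := S.mem_invariants_of_add_eq ha₀ ha₁ ha
  suffices a₁ = 0 by simpa [this] using ha₀
  by_contra hne
  obtain ⟨b, hb⟩ := hs.exists_mul_eq_one hg hinv₁ ha₁ hne
  apply hne
  calc a₁ = b * a₁ * a₁ := by rw [hb, one_mul]
    _ = 0 := by rw [mul_assoc, hg.mul_self_eq_zero_of_mem_grade_one h2 ha₁, mul_zero]

end SuperAction

theorem stmt5 {R D A : Type u} [Field R] [CharZero R] [Ring D] [Algebra R D]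
    [Ring A] [Algebra R A] (H : SuperHopf R D) (g : SuperRing R A)
    (hg : g.SuperComm) (S : SuperAction R D A H g) (hs : S.IsSimple) :
    S.invariants ≤ g.grade 0 ∧
    (1 : A) ∈ S.invariants ∧
    (∀ a ∈ S.invariants, ∀ b ∈ S.invariants, a * b ∈ S.invariants) ∧
    (∀ a ∈ S.invariants, a ≠ 0 → ∃ b ∈ S.invariants, a * b = 1) := by
  have heven := hs.invariants_le_grade_zero hg two_ne_zero
  refine ⟨heven, S.one_mem_invariants, fun a ha b hb => S.mul_mem_invariants ha hb, ?_⟩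
  intro a ha ha0
  obtain ⟨b, hba⟩ := hs.exists_mul_eq_one hg ha (heven ha) ha0
  have hab : a * b = 1 := by rw [hg.mul_comm_of_mem_grade_zero (heven ha), hba]
  exact ⟨b, S.mem_invariants_of_mul_eq_one ha hba hab, hab⟩
end

section
/- Let H be a super-commutative Hopf superalgebra over a field k, A an H-supercomodule superalgebra with coaction θ_A, and K a sub-superalgebra of A such that the map Ξ_A : A ⊗_k A → A ⊗_k H, a ⊗ a' ↦ a·θ_A(a'), induces an isomorphism A ⊗_K A ≅ A ⊗_k H. If A is faithfully flat over K, or if K is self-injective as a K-supermodule, then K = A^{co H}, the subalgebra of H-coinvariants. -/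
open scoped TensorProduct

universe u

/-- A right `H`-supercomodule superalgebra structure on `A`, for a super-commutative
Hopf superalgebra `H`: a coassociative, counital coaction `θ : A → A ⊗ H` which is an
algebra morphism for the (signed) super tensor-product algebra structure, expressed
via homogeneous representations. -/
structure SuperComodAlg (k : Type u) [Field k] (HH A : Type u) [Ring HH] [Algebra k HH]
    [Ring A] [Algebra k A] (gH : SuperHopf k HH) (gA : SuperRing k A) where
  coact : A →ₗ[k] A ⊗[k] HH
  coassoc : ∀ a : A,
    (TensorProduct.assoc k A HH HH).toLinearMap
        ((LinearMap.rTensor HH coact) (coact a))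
      = (LinearMap.lTensor A gH.comul) (coact a)
  counit_coact : ∀ a : A,
    (TensorProduct.rid k A) ((LinearMap.lTensor A gH.counit) (coact a)) = a
  coact_one : coact 1 = 1 ⊗ₜ[k] 1
  coact_mul : ∀ (a b : A) (ι κ : Type u) (s : Finset ι) (t : Finset κ)
    (xa : ι → A) (xh : ι → HH) (ph : ι → ZMod 2)
    (yb : κ → A) (pb : κ → ZMod 2) (yk : κ → HH),
    (∀ i ∈ s, xh i ∈ gH.grade (ph i)) → (∀ j ∈ t, yb j ∈ gA.grade (pb j)) →
    (∑ i ∈ s, xa i ⊗ₜ[k] xh i) = coact a → (∑ j ∈ t, yb j ⊗ₜ[k] yk j) = coact b →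
    coact (a * b) = ∑ i ∈ s, ∑ j ∈ t,
      ((-1 : k) ^ ((ph i).val * (pb j).val)) • ((xa i * yb j) ⊗ₜ[k] (xh i * yk j))
  coact_grade : ∀ (p : ZMod 2), ∀ a ∈ gA.grade p, coact a ∈
    ⨆ q : ZMod 2, LinearMap.range
      (TensorProduct.map (gA.grade q).subtype (gH.grade (p - q)).subtype)

/-- The `H`-coinvariants `A^{co H}`. -/
def SuperComodAlg.coinvariants {k : Type u} [Field k] {HH A : Type u} [Ring HH]
    [Algebra k HH] [Ring A] [Algebra k A] {gH : SuperHopf k HH} {gA : SuperRing k A}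
    (C : SuperComodAlg k HH A gH gA) : Set A :=
  {a : A | C.coact a = a ⊗ₜ[k] (1 : HH)}

section Maps

variable {k : Type u} [Field k] {HH A : Type u} [Ring HH] [Algebra k HH]
  [Ring A] [Algebra k A] {gH : SuperHopf k HH} {gA : SuperRing k A}

/-- The Galois-type map `Ξ_A : A ⊗ A → A ⊗ H`, `a ⊗ a' ↦ a·θ(a')`. -/
noncomputable def XiLin (C : SuperComodAlg k HH A gH gA) :
    A ⊗[k] A →ₗ[k] A ⊗[k] HH :=
  TensorProduct.lift (LinearMap.mk₂ k
    (fun a b => ((Algebra.TensorProduct.includeLeft : A →ₐ[k] A ⊗[k] HH) a) * C.coact b)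
    (fun a a' b => by
      simp [Algebra.TensorProduct.includeLeft_apply, TensorProduct.add_tmul, add_mul])
    (fun r a b => by
      show (r • a) ⊗ₜ[k] (1 : HH) * C.coact b = r • (a ⊗ₜ[k] (1 : HH) * C.coact b)
      rw [← TensorProduct.smul_tmul', smul_mul_assoc])
    (fun a b b' => by simp [mul_add])
    (fun r a b => by simp [mul_smul_comm]))

/-- The submodule of `A ⊗ A` of relations over a subalgebra `K`, whose quotient is
`A ⊗_K A`. -/
def relK (K : Subalgebra k A) : Submodule k (A ⊗[k] A) :=
  Submodule.span k {z : A ⊗[k] A | ∃ (a b c : A), c ∈ K ∧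
    z = (a * c) ⊗ₜ[k] b - a ⊗ₜ[k] (c * b)}

/-- The multiplication map `I ⊗ A → A` for an `R`-subspace `I ⊆ A`. -/
noncomputable def mulMapI (I : Submodule k A) : (↥I ⊗[k] A) →ₗ[k] A :=
  TensorProduct.lift (LinearMap.mk₂ k (fun x a => (x : A) * a)
    (fun x y a => by simp [add_mul])
    (fun r x a => by simp [smul_mul_assoc])
    (fun x a b => by simp [mul_add])
    (fun r x a => by simp [mul_smul_comm]))

/-- Faithful flatness of `A` over a subalgebra `K`, expressed via the ideal
criterion (flatness) together with `I·A ≠ A` for proper right ideals `I` of `K`. -/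
def FaithfullyFlatOver (K : Subalgebra k A) : Prop :=
  (∀ I : Submodule k A, I ≤ Subalgebra.toSubmodule K →
    (∀ x ∈ I, ∀ c ∈ K, x * c ∈ I) →
    ∀ z : ↥I ⊗[k] A, mulMapI I z = 0 →
      z ∈ Submodule.span k {w : ↥I ⊗[k] A |
        ∃ (x : ↥I) (c : A) (a : A) (_ : c ∈ K) (h : (x : A) * c ∈ I),
          w = (⟨(x : A) * c, h⟩ : ↥I) ⊗ₜ[k] a - x ⊗ₜ[k] (c * a)}) ∧
  (∀ I : Submodule k A, I ≤ Subalgebra.toSubmodule K →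
    (∀ x ∈ I, ∀ c ∈ K, x * c ∈ I) → I ≠ Subalgebra.toSubmodule K →
    Submodule.span k {y : A | ∃ x ∈ I, ∃ a : A, y = x * a} ≠ ⊤)

end Maps

/-!
If `c ∈ K`, the relation `c ⊗ 1 - 1 ⊗ c` of `A ⊗_K A` is killed by `Ξ`, which says `θ(c) = c ⊗ 1`.
Conversely, if `θ(a) = a ⊗ 1` then `Ξ(1 ⊗ a - a ⊗ 1) = 0`, so `1 ⊗ a = a ⊗ 1` in `A ⊗_K A`, and this
forces `a ∈ K`. If `K` is self-injective, a `K`-linear retraction `r : A → K` of the inclusion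
gives `x ⊗ y ↦ x r(y)` on `A ⊗_K A`, which sends `1 ⊗ a - a ⊗ 1` to `r(a) - a`. If `A` is
faithfully flat, let `I = {c ∈ K | a c ∈ K}`, so that `(K + aK)/K ≅ K/I` as right `K`-modules. The
class of `a ⊗ 1` vanishes in `(A/K) ⊗_K A`, hence by flatness already in
`((K + aK)/K) ⊗_K A ≅ A/IA`, where it is the class of `1`. So `IA = A`, and faithfulness gives
`I = K`, i.e. `a ∈ K`. Flatness for all right `K`-modules is derived from the ideal criterion as
usual, by induction on the rank of a free module `V ⊗ K` and a finiteness argument.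
-/

open LinearMap

section Flatness

variable {k A : Type u} [Field k] [Ring A] [Algebra k A]

def idealRel (K : Subalgebra k A) (I : Submodule k A) : Submodule k (↥I ⊗[k] A) :=
  Submodule.span k {w : ↥I ⊗[k] A |
    ∃ (x : ↥I) (c : A) (a : A) (_ : c ∈ K) (h : (x : A) * c ∈ I),
      w = (⟨(x : A) * c, h⟩ : ↥I) ⊗ₜ[k] a - x ⊗ₜ[k] (c * a)}

def FlatOver (K : Subalgebra k A) : Prop :=
  ∀ I : Submodule k A, I ≤ Subalgebra.toSubmodule K → (∀ x ∈ I, ∀ c ∈ K, x * c ∈ I) →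
    ∀ z : ↥I ⊗[k] A, mulMapI I z = 0 → z ∈ idealRel K I

theorem FaithfullyFlatOver.flatOver {K : Subalgebra k A} (h : FaithfullyFlatOver K) :
    FlatOver K :=
  h.1

end Flatness

/-! `V ⊗[k] K` is the free right `K`-module on `V`. For a right `K`-submodule `T` of it,
`T ⊗_K A` is modelled as `(T ⊗[k] A) ⧸ rel T`, so `ker (inclTensor T) ≤ rel T` says that
`T ⊗_K A → (V ⊗[k] K) ⊗_K A = V ⊗[k] A` is injective. -/
namespace FreeRight

variable {k A : Type u} [Field k] [Ring A] [Algebra k A] {K : Subalgebra k A}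
  {V : Type*} [AddCommGroup V] [Module k V]

noncomputable def mulRight (c : K) : V ⊗[k] K →ₗ[k] V ⊗[k] K :=
  lTensor V (LinearMap.mulRight k c)

@[simp]
lemma mulRight_tmul (c c' : K) (v : V) : mulRight c (v ⊗ₜ[k] c') = v ⊗ₜ[k] (c' * c) := rfl

def IsRightStable (T : Submodule k (V ⊗[k] K)) : Prop :=
  ∀ c : K, ∀ x ∈ T, mulRight c x ∈ T

noncomputable def eval : (V ⊗[k] K) ⊗[k] A →ₗ[k] V ⊗[k] A :=
  lTensor V (TensorProduct.lift ((LinearMap.mul k A).comp K.val.toLinearMap)) ∘ₗ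
    (TensorProduct.assoc k V K A).toLinearMap

@[simp]
lemma eval_tmul (v : V) (c : K) (b : A) :
    eval ((v ⊗ₜ[k] c) ⊗ₜ[k] b) = v ⊗ₜ[k] ((c : A) * b) := by
  simp [eval]

lemma eval_mulRight_tmul (c : K) (ξ : V ⊗[k] K) (b : A) :
    eval (mulRight c ξ ⊗ₜ[k] b) = eval (ξ ⊗ₜ[k] ((c : A) * b)) := by
  induction ξ using TensorProduct.induction_on with
  | zero => simp
  | tmul v c' => simp [mul_assoc]
  | add x y hx hy => simp only [map_add, TensorProduct.add_tmul, hx, hy]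

def rel (T : Submodule k (V ⊗[k] K)) : Submodule k (↥T ⊗[k] A) :=
  Submodule.span k {w | ∃ (x : T) (c : K) (b : A) (h : mulRight c (x : V ⊗[k] K) ∈ T),
    w = (⟨_, h⟩ : T) ⊗ₜ[k] b - x ⊗ₜ[k] ((c : A) * b)}

noncomputable def inclTensor (T : Submodule k (V ⊗[k] K)) : ↥T ⊗[k] A →ₗ[k] V ⊗[k] A :=
  eval ∘ₗ rTensor A T.subtype

@[simp]
lemma inclTensor_tmul (T : Submodule k (V ⊗[k] K)) (x : T) (b : A) :
    inclTensor T (x ⊗ₜ[k] b) = eval ((x : V ⊗[k] K) ⊗ₜ[k] b) := rfl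

lemma inclTensor_rTensor_inclusion {S T : Submodule k (V ⊗[k] K)} (h : S ≤ T)
    (σ : ↥S ⊗[k] A) : inclTensor T (rTensor A (Submodule.inclusion h) σ) = inclTensor S σ := by
  rw [inclTensor, LinearMap.comp_apply, ← rTensor_comp_apply, Submodule.subtype_comp_inclusion]
  rfl

lemma rel_le_ker_inclTensor (T : Submodule k (V ⊗[k] K)) : rel T ≤ ker (inclTensor (A := A) T) :=
  Submodule.span_le.mpr <| by
    rintro _ ⟨x, c, b, h, rfl⟩
    simp [eval_mulRight_tmul]

section Comap

variable {V' : Type*} [AddCommGroup V'] [Module k V'] (ι : V' →ₗ[k] V)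
  (T : Submodule k (V ⊗[k] K))

lemma rTensor_mulRight (c : K) (ξ : V' ⊗[k] K) :
    rTensor K ι (mulRight c ξ) = mulRight c (rTensor K ι ξ) := by
  induction ξ using TensorProduct.induction_on with
  | zero => simp
  | tmul v c' => simp
  | add x y hx hy => simp only [map_add, hx, hy]

def comap : Submodule k (V' ⊗[k] K) := T.comap (rTensor K ι)

lemma IsRightStable.comap {T : Submodule k (V ⊗[k] K)} (hT : IsRightStable T) :
    IsRightStable (comap ι T) := by
  intro c x hx
  simpa [FreeRight.comap, rTensor_mulRight] using hT c _ hx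

noncomputable def comapMap : comap ι T →ₗ[k] T :=
  (rTensor K ι ∘ₗ (comap ι T).subtype).codRestrict T fun x => x.2

@[simp]
lemma coe_comapMap (x : comap ι T) : (comapMap ι T x : V ⊗[k] K) = rTensor K ι x := rfl

lemma inclTensor_rTensor_comapMap (y : ↥(comap ι T) ⊗[k] A) :
    inclTensor T (rTensor A (comapMap ι T) y) = rTensor A ι (inclTensor (comap ι T) y) := by
  induction y using TensorProduct.induction_on with
  | zero => simp
  | add x y hx hy => simp only [map_add, hx, hy]
  | tmul x b =>
    simp only [rTensor_tmul, inclTensor_tmul, coe_comapMap]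
    induction (x : V' ⊗[k] K) using TensorProduct.induction_on with
    | zero => simp
    | tmul v c => simp
    | add x y hx hy => simp only [map_add, TensorProduct.add_tmul, hx, hy]

lemma rel_le_comap_rel : rel (A := A) (comap ι T) ≤ (rel T).comap (rTensor A (comapMap ι T)) :=
  Submodule.span_le.mpr <| by
    rintro _ ⟨x, c, b, h, rfl⟩
    have h' : mulRight c (comapMap ι T x : V ⊗[k] K) ∈ T := by
      rw [coe_comapMap, ← rTensor_mulRight]
      exact h
    refine Submodule.subset_span ⟨comapMap ι T x, c, b, h', ?_⟩
    simp only [map_sub, rTensor_tmul]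
    congr 2
    exact Subtype.ext (rTensor_mulRight ι c x)

lemma rTensor_comapMap_mem_rel {ι : V' →ₗ[k] V} (hι : Function.Injective ι)
    {T : Submodule k (V ⊗[k] K)} (hflat : ker (inclTensor (A := A) (comap ι T)) ≤ rel (comap ι T))
    (y : ↥(comap ι T) ⊗[k] A) (hy : inclTensor T (rTensor A (comapMap ι T) y) = 0) :
    rTensor A (comapMap ι T) y ∈ rel T := by
  have hker : inclTensor (comap ι T) y = 0 :=
    Module.Flat.rTensor_preserves_injective_linearMap ι hι <| by
      rw [← inclTensor_rTensor_comapMap, hy, map_zero]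
  exact Submodule.mem_comap.mp (rel_le_comap_rel ι T (hflat hker))

end Comap

section Coord

variable (φ : V →ₗ[k] k)

noncomputable def coord : V ⊗[k] K →ₗ[k] A :=
  K.val.toLinearMap ∘ₗ (TensorProduct.lid k K).toLinearMap ∘ₗ rTensor K φ

@[simp]
lemma coord_tmul (v : V) (c : K) : coord φ (v ⊗ₜ[k] c) = φ v • (c : A) := by
  simp [coord]

lemma coord_mem (ξ : V ⊗[k] K) : coord φ ξ ∈ K := SetLike.coe_mem _

lemma coord_mulRight (c : K) (ξ : V ⊗[k] K) : coord φ (mulRight c ξ) = coord φ ξ * c := by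
  induction ξ using TensorProduct.induction_on with
  | zero => simp
  | tmul v c' => simp
  | add x y hx hy => simp only [map_add, hx, hy, add_mul]

lemma lid_rTensor_eval (ξ : V ⊗[k] K) (b : A) :
    TensorProduct.lid k A (rTensor A φ (eval (ξ ⊗ₜ[k] b))) = coord φ ξ * b := by
  induction ξ using TensorProduct.induction_on with
  | zero => simp
  | tmul v c => simp
  | add x y hx hy => simp only [map_add, TensorProduct.add_tmul, hx, hy, add_mul]

lemma exact_rTensor_coord (hφ : Function.Surjective φ) :
    Function.Exact (rTensor K (ker φ).subtype) (coord φ) :=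
  (rTensor_exact K (exact_subtype_ker_map φ) hφ).comp_injective
    (g' := K.val.toLinearMap ∘ₗ (TensorProduct.lid k K).toLinearMap)
    (Subtype.val_injective.comp (TensorProduct.lid k K).injective) (map_zero _)

variable (T : Submodule k (V ⊗[k] K))

noncomputable def coordIdeal : Submodule k A := T.map (coord φ)

lemma coordIdeal_le : coordIdeal φ T ≤ Subalgebra.toSubmodule K := by
  rintro _ ⟨ξ, -, rfl⟩
  exact coord_mem φ ξ

lemma coordIdeal_mul_mem {T : Submodule k (V ⊗[k] K)} (hT : IsRightStable T) :
    ∀ x ∈ coordIdeal φ T, ∀ c ∈ K, x * c ∈ coordIdeal φ T := by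
  rintro _ ⟨ξ, hξ, rfl⟩ c hc
  exact ⟨mulRight ⟨c, hc⟩ ξ, hT _ _ hξ, coord_mulRight φ _ ξ⟩

noncomputable def coordRestrict : T →ₗ[k] coordIdeal φ T :=
  (coord φ ∘ₗ T.subtype).codRestrict _ fun x => ⟨x, x.2, rfl⟩

@[simp]
lemma coe_coordRestrict (x : T) : (coordRestrict φ T x : A) = coord φ (x : V ⊗[k] K) := rfl

lemma coordRestrict_surjective : Function.Surjective (coordRestrict φ T) := by
  rintro ⟨_, ξ, hξ, rfl⟩
  exact ⟨⟨ξ, hξ⟩, rfl⟩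

lemma exact_comapMap_coordRestrict (hφ : Function.Surjective φ) :
    Function.Exact (comapMap (ker φ).subtype T) (coordRestrict φ T) := by
  intro x
  constructor
  · intro hx
    obtain ⟨ξ, hξ⟩ := (exact_rTensor_coord φ hφ (x : V ⊗[k] K)).mp
      (congrArg Subtype.val hx)
    exact ⟨⟨ξ, show rTensor K _ ξ ∈ T from hξ ▸ x.2⟩, Subtype.ext hξ⟩
  · rintro ⟨ξ, rfl⟩
    exact Subtype.ext ((exact_rTensor_coord φ hφ _).mpr ⟨ξ, rfl⟩)

lemma mulMapI_rTensor_coordRestrict (w : ↥T ⊗[k] A) :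
    mulMapI (coordIdeal φ T) (rTensor A (coordRestrict φ T) w)
      = TensorProduct.lid k A (rTensor A φ (inclTensor T w)) := by
  induction w using TensorProduct.induction_on with
  | zero => simp
  | tmul x b =>
    simp only [rTensor_tmul, inclTensor_tmul, lid_rTensor_eval]
    simp [mulMapI]
  | add x y hx hy => simp only [map_add, hx, hy]

lemma idealRel_le_map_rel {T : Submodule k (V ⊗[k] K)} (hT : IsRightStable T) :
    idealRel K (coordIdeal φ T) ≤ (rel T).map (rTensor A (coordRestrict φ T)) :=
  Submodule.span_le.mpr <| by
    rintro _ ⟨x, c, b, hc, h, rfl⟩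
    obtain ⟨x, rfl⟩ := coordRestrict_surjective φ T x
    have hmem : mulRight ⟨c, hc⟩ (x : V ⊗[k] K) ∈ T := hT _ _ x.2
    refine ⟨_, Submodule.subset_span ⟨x, ⟨c, hc⟩, b, hmem, rfl⟩, ?_⟩
    simp only [map_sub, rTensor_tmul]
    congr 2
    exact Subtype.ext (coord_mulRight φ _ _)

end Coord

-- `T` is an extension of the right ideal `coordIdeal φ T` of `K` by `comap (ker φ).subtype T`.
lemma exists_eq_add_rTensor_comapMap (hK : FlatOver K) {φ : V →ₗ[k] k}
    (hφ : Function.Surjective φ) {T : Submodule k (V ⊗[k] K)} (hT : IsRightStable T)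
    {z : ↥T ⊗[k] A} (hz : inclTensor T z = 0) :
    ∃ r ∈ rel T, ∃ y, z = r + rTensor A (comapMap (ker φ).subtype T) y := by
  have hz' : mulMapI (coordIdeal φ T) (rTensor A (coordRestrict φ T) z) = 0 := by
    rw [mulMapI_rTensor_coordRestrict, hz, map_zero, map_zero]
  obtain ⟨r, hr, hrz⟩ := idealRel_le_map_rel φ hT
    (hK _ (coordIdeal_le φ T) (coordIdeal_mul_mem φ hT) _ hz')
  have hexact := rTensor_exact (M := comap (ker φ).subtype T) A
    (exact_comapMap_coordRestrict φ T hφ)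
    (coordRestrict_surjective φ T)
  obtain ⟨y, hy⟩ := (hexact (z - r)).mp (by rw [map_sub, hrz, sub_self])
  exact ⟨r, hr, y, by rw [hy, add_sub_cancel]⟩

theorem ker_inclTensor_le_rel_of_finiteDimensional (hK : FlatOver K) [FiniteDimensional k V]
    {T : Submodule k (V ⊗[k] K)}
    (hT : IsRightStable T) : ker (inclTensor (A := A) T) ≤ rel T := by
  induction hn : Module.finrank k V generalizing V with
  | zero =>
    have : Subsingleton V := Module.finrank_zero_iff.mp hn
    intro z _
    rw [Subsingleton.elim z 0]
    exact zero_mem _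
  | succ n ih =>
    have : Nontrivial V := Module.nontrivial_of_finrank_pos (R := k) (by omega)
    obtain ⟨v, hv⟩ := exists_ne (0 : V)
    obtain ⟨φ, hφv⟩ := Module.Projective.exists_dual_eq_one k hv
    have hφ : Function.Surjective φ := fun r => ⟨r • v, by simp [hφv]⟩
    have hker : Module.finrank k (ker φ) = n := by
      have := φ.finrank_range_add_finrank_ker
      rw [range_eq_top.mpr hφ, finrank_top, Module.finrank_self] at this
      omega
    intro z hz
    obtain ⟨r, hr, y, rfl⟩ := exists_eq_add_rTensor_comapMap hK hφ hT hz
    refine add_mem hr (rTensor_comapMap_mem_rel (ker φ).injective_subtype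
      (ih (hT.comap _) hker) y ?_)
    rwa [mem_ker, map_add, rel_le_ker_inclTensor T hr, zero_add] at hz

lemma exists_rTensor_comapMap_eq (T : Submodule k (V ⊗[k] K)) (z : ↥T ⊗[k] A) :
    ∃ V₀ : Submodule k V, FiniteDimensional k V₀ ∧
      ∃ y, rTensor A (comapMap V₀.subtype T) y = z := by
  classical
  obtain ⟨s, rfl⟩ := TensorProduct.exists_finset z
  obtain ⟨V₀, hV₀, hs⟩ := TensorProduct.exists_finite_submodule_left_of_setFinite
    ((fun i : T × A => (i.1 : V ⊗[k] K)) '' s) (s.finite_toSet.image _)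
  have hlift : ∀ i ∈ s, ∃ x, comapMap V₀.subtype T x = i.1 := by
    intro i hi
    obtain ⟨ξ, hξ⟩ := hs ⟨i, hi, rfl⟩
    exact ⟨⟨ξ, show rTensor K _ ξ ∈ T from hξ ▸ i.1.2⟩, Subtype.ext hξ⟩
  choose x hx using hlift
  refine ⟨V₀, hV₀, ∑ i ∈ s.attach, x i i.2 ⊗ₜ[k] i.1.2, ?_⟩
  rw [map_sum, ← Finset.sum_attach s]
  exact Finset.sum_congr rfl fun i _ => by rw [rTensor_tmul, hx]

theorem ker_inclTensor_le_rel (hK : FlatOver K) {T : Submodule k (V ⊗[k] K)}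
    (hT : IsRightStable T) : ker (inclTensor (A := A) T) ≤ rel T := by
  intro z hz
  obtain ⟨V₀, _, y, rfl⟩ := exists_rTensor_comapMap_eq T z
  exact rTensor_comapMap_mem_rel V₀.injective_subtype
    (ker_inclTensor_le_rel_of_finiteDimensional hK (hT.comap _)) y hz

end FreeRight

section Descent

open FreeRight

variable {k A : Type u} [Field k] [Ring A] [Algebra k A] (K : Subalgebra k A)

lemma relK_le_ker_lift {M : Type*} [AddCommGroup M] [Module k M] (f : A →ₗ[k] A →ₗ[k] M)
    (hf : ∀ x y c : A, c ∈ K → f (x * c) y = f x (c * y)) :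
    relK K ≤ ker (TensorProduct.lift f) :=
  Submodule.span_le.mpr <| by
    rintro _ ⟨x, y, c, hc, rfl⟩
    simp [hf x y c hc]

theorem mem_of_one_tmul_sub_mem_relK_of_injective (hK : Module.Injective K K) {a : A}
    (ha : (1 : A) ⊗ₜ[k] a - a ⊗ₜ[k] 1 ∈ relK K) : a ∈ K := by
  obtain ⟨r, hr⟩ := hK.out
    { toFun := Subtype.val, map_add' := fun _ _ => rfl, map_smul' := fun _ _ => rfl }
    Subtype.val_injective
    LinearMap.id
  have hr_mul : ∀ (c : K) (y : A), (r (c * y) : A) = c * r y := fun c y =>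
    congrArg Subtype.val (r.map_smul c y)
  have hr_one : (r 1 : A) = 1 := congrArg Subtype.val (hr 1)
  have h := relK_le_ker_lift K
    ((LinearMap.mul k A).compl₂ (K.val.toLinearMap ∘ₗ r.restrictScalars k))
    (fun x y c hc => by simp [mul_assoc, hr_mul ⟨c, hc⟩ y]) ha
  simp [hr_one, sub_eq_zero] at h
  exact h ▸ (r a).2

def extendRight (I : Submodule k A) : Submodule k A :=
  Submodule.span k {y : A | ∃ x ∈ I, ∃ b : A, y = x * b}

lemma mul_mem_extendRight {I : Submodule k A} {y : A} (hy : y ∈ extendRight I) (b : A) :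
    y * b ∈ extendRight I := by
  induction hy using Submodule.span_induction with
  | mem y hy =>
    obtain ⟨x, hx, b₀, rfl⟩ := hy
    exact Submodule.subset_span ⟨x, hx, b₀ * b, mul_assoc _ _ _⟩
  | zero => simp
  | add y z _ _ hy hz => simpa [add_mul] using add_mem hy hz
  | smul r y _ hy => simpa [smul_mul_assoc] using Submodule.smul_mem _ r hy

noncomputable def quotMul (I : Submodule k A) :
    A ⧸ extendRight I →ₗ[k] A →ₗ[k] A ⧸ extendRight I :=
  (extendRight I).liftQ ((LinearMap.mul k A).compr₂ (extendRight I).mkQ) fun y hy => by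
    ext b
    simpa [Submodule.Quotient.mk_eq_zero] using mul_mem_extendRight hy b

@[simp]
lemma quotMul_mk (I : Submodule k A) (x b : A) :
    quotMul I (Submodule.Quotient.mk x) b = Submodule.Quotient.mk (x * b) := rfl

namespace Subalgebra

variable (a : A)

noncomputable def tensorMul : A ⊗[k] K →ₗ[k] A :=
  TensorProduct.lift ((LinearMap.mul k A).compl₂ K.val.toLinearMap)

@[simp]
lemma tensorMul_tmul (x : A) (c : K) : tensorMul K (x ⊗ₜ[k] c) = x * c := rfl

lemma tensorMul_mulRight (c : K) (ξ : A ⊗[k] K) :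
    tensorMul K (mulRight c ξ) = tensorMul K ξ * c := by
  induction ξ using TensorProduct.induction_on with
  | zero => simp
  | tmul x c' => simp [mul_assoc]
  | add x y hx hy => simp only [map_add, hx, hy, add_mul]

lemma relK_le_range_inclTensor_ker : relK K ≤ range (inclTensor (ker (tensorMul K))) :=
  Submodule.span_le.mpr <| by
    rintro _ ⟨x, b, c, hc, rfl⟩
    have h : (x * c) ⊗ₜ[k] (1 : K) - x ⊗ₜ[k] ⟨c, hc⟩ ∈ ker (tensorMul K) := by simp
    exact ⟨⟨_, h⟩ ⊗ₜ[k] b, by simp [TensorProduct.sub_tmul]⟩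

noncomputable def quotMulLeft : K →ₗ[k] A ⧸ Subalgebra.toSubmodule K :=
  (Subalgebra.toSubmodule K).mkQ ∘ₗ LinearMap.mulLeft k a ∘ₗ K.val.toLinearMap

lemma quotMulLeft_apply (c : K) :
    quotMulLeft K a c = Submodule.Quotient.mk (a * c) := rfl

lemma mk_mul_eq_quotMulLeft {y : A} {c₀ : K}
    (h : Submodule.Quotient.mk y = quotMulLeft K a c₀) (c : K) :
    (Submodule.Quotient.mk (y * c) : A ⧸ Subalgebra.toSubmodule K)
      = quotMulLeft K a (c₀ * c) := by
  rw [quotMulLeft_apply, Submodule.Quotient.eq] at h ⊢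
  simpa [mul_assoc, sub_mul] using K.mul_mem h c.2

def conductor : Submodule k A :=
  Subalgebra.toSubmodule K ⊓ (Subalgebra.toSubmodule K).comap (LinearMap.mulLeft k a)

lemma conductor_mul_mem : ∀ x ∈ conductor K a, ∀ c ∈ K, x * c ∈ conductor K a := by
  rintro x ⟨hx, hax⟩ c hc
  refine ⟨K.mul_mem hx hc, ?_⟩
  simpa [mul_assoc] using K.mul_mem hax hc

-- The preimage of `K + aK` in the free module `A ⊗ K`: it replaces `(K + aK)/K`, so that
-- `FreeRight.ker_inclTensor_le_rel` applies.
noncomputable def tensorPreimage : Submodule k (A ⊗[k] K) :=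
  (range (quotMulLeft K a)).comap ((Subalgebra.toSubmodule K).mkQ ∘ₗ tensorMul K)

lemma mem_tensorPreimage_of_mem {ξ : A ⊗[k] K} (h : tensorMul K ξ ∈ K) :
    ξ ∈ tensorPreimage K a :=
  Submodule.mem_comap.mpr ⟨0, by
    rw [map_zero]
    exact ((Submodule.Quotient.mk_eq_zero _).mpr h).symm⟩

lemma isRightStable_tensorPreimage : IsRightStable (tensorPreimage K a) := by
  intro c ξ hξ
  obtain ⟨c₀, hc₀⟩ := Submodule.mem_comap.mp hξ
  refine Submodule.mem_comap.mpr ⟨c₀ * c, ?_⟩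
  rw [LinearMap.comp_apply, tensorMul_mulRight]
  exact (mk_mul_eq_quotMulLeft K a hc₀.symm c).symm

noncomputable def residue : tensorPreimage K a →ₗ[k] A ⧸ extendRight (conductor K a) :=
  (ker (quotMulLeft K a)).liftQ ((extendRight (conductor K a)).mkQ ∘ₗ K.val.toLinearMap)
      (fun c hc => by
        have hc' : a * c ∈ K := (Submodule.Quotient.mk_eq_zero _).mp hc
        have hc'' : (c : A) ∈ extendRight (conductor K a) :=
          Submodule.subset_span ⟨c, ⟨c.2, hc'⟩, 1, (mul_one _).symm⟩
        simpa [Submodule.Quotient.mk_eq_zero] using hc'') ∘ₗ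
    (quotMulLeft K a).quotKerEquivRange.symm.toLinearMap ∘ₗ
    ((Subalgebra.toSubmodule K).mkQ ∘ₗ tensorMul K ∘ₗ (tensorPreimage K a).subtype).codRestrict
      _ fun t => t.2

lemma residue_eq {t : tensorPreimage K a} {c : K}
    (h : Submodule.Quotient.mk (tensorMul K t) = quotMulLeft K a c) :
    residue K a t = Submodule.Quotient.mk (c : A) := by
  have hcod : (((Subalgebra.toSubmodule K).mkQ ∘ₗ tensorMul K ∘ₗ
      (tensorPreimage K a).subtype).codRestrict (range (quotMulLeft K a)) fun t => t.2) t =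
      ⟨quotMulLeft K a c, mem_range_self _ c⟩ :=
    Subtype.ext h
  simp only [residue, LinearMap.comp_apply, hcod, LinearEquiv.coe_coe]
  rw [quotKerEquivRange_symm_apply_image]
  rfl

lemma residue_eq_zero {t : tensorPreimage K a} (h : tensorMul K t ∈ K) : residue K a t = 0 := by
  simpa using residue_eq K a (c := 0) (by simpa [Submodule.Quotient.mk_eq_zero] using h)

noncomputable def residueEval :
    ↥(tensorPreimage K a) ⊗[k] A →ₗ[k] A ⧸ extendRight (conductor K a) :=
  TensorProduct.lift (quotMul (conductor K a) ∘ₗ residue K a)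

@[simp]
lemma residueEval_tmul (t : tensorPreimage K a) (b : A) :
    residueEval K a (t ⊗ₜ[k] b) = quotMul (conductor K a) (residue K a t) b := rfl

lemma rel_le_ker_residueEval : rel (tensorPreimage K a) ≤ ker (residueEval K a) :=
  Submodule.span_le.mpr <| by
    rintro _ ⟨t, c, b, h, rfl⟩
    obtain ⟨c₀, hc₀⟩ := Submodule.mem_comap.mp t.2
    have ht : residue K a t = Submodule.Quotient.mk (c₀ : A) := residue_eq K a hc₀.symm
    have hct : residue K a ⟨_, h⟩ = Submodule.Quotient.mk ((c₀ * c : K) : A) := by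
      refine residue_eq K a ?_
      rw [tensorMul_mulRight]
      exact mk_mul_eq_quotMulLeft K a hc₀.symm c
    simp [ht, hct, mul_assoc]

theorem exists_residueEval_eq_one (ha : (1 : A) ⊗ₜ[k] a - a ⊗ₜ[k] 1 ∈ relK K) :
    ∃ τ, inclTensor (tensorPreimage K a) τ = 0 ∧
      residueEval K a τ = Submodule.Quotient.mk 1 := by
  obtain ⟨σ, hσ⟩ := relK_le_range_inclTensor_ker K ha
  have hker : ker (tensorMul K) ≤ tensorPreimage K a := fun ξ hξ =>
    mem_tensorPreimage_of_mem K a (by simp [mem_ker.mp hξ])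
  have h₁ : a ⊗ₜ[k] (1 : K) ∈ tensorPreimage K a :=
    Submodule.mem_comap.mpr ⟨1, by simp [quotMulLeft_apply]⟩
  have h₀ : (-1 : A) ⊗ₜ[k] (1 : K) ∈ tensorPreimage K a :=
    mem_tensorPreimage_of_mem K a (by simp)
  -- `(-1) ⊗ 1` keeps `τ` a sum: instance synthesis fails to find subtraction on this tensor product.
  refine ⟨(⟨_, h₁⟩ : tensorPreimage K a) ⊗ₜ[k] (1 : A) + (⟨_, h₀⟩ : tensorPreimage K a) ⊗ₜ[k] a
    + rTensor A (Submodule.inclusion hker) σ, ?_, ?_⟩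
  · simp only [map_add, inclTensor_tmul, inclTensor_rTensor_inclusion, hσ, eval_tmul,
      OneMemClass.coe_one, one_mul]
    rw [TensorProduct.neg_tmul]
    abel
  · have hσ₀ : residueEval K a ∘ₗ rTensor A (Submodule.inclusion hker) = 0 :=
      TensorProduct.ext' fun ξ b => by
        simp [residue_eq_zero K a (t := Submodule.inclusion hker ξ) (by simp [mem_ker.mp ξ.2])]
    have h₁' : residue K a ⟨_, h₁⟩ = Submodule.Quotient.mk 1 :=
      residue_eq K a (c := 1) (by simp [quotMulLeft_apply])
    have h₀' : residue K a ⟨_, h₀⟩ = 0 :=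
      residue_eq_zero K a (by simp)
    simp [h₁', h₀', ← LinearMap.comp_apply, hσ₀]

theorem mem_of_one_tmul_sub_mem_relK_of_faithfullyFlatOver (hK : FaithfullyFlatOver K)
    (ha : (1 : A) ⊗ₜ[k] a - a ⊗ₜ[k] 1 ∈ relK K) : a ∈ K := by
  obtain ⟨τ, hτ, hτ1⟩ := exists_residueEval_eq_one K a ha
  have h1 : (1 : A) ∈ extendRight (conductor K a) := by
    rw [← Submodule.Quotient.mk_eq_zero, ← hτ1]
    exact rel_le_ker_residueEval K a
      (FreeRight.ker_inclTensor_le_rel hK.flatOver (isRightStable_tensorPreimage K a) hτ)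
  have htop : extendRight (conductor K a) = ⊤ :=
    Submodule.eq_top_iff'.mpr fun b => by simpa using mul_mem_extendRight h1 b
  have hI : conductor K a = Subalgebra.toSubmodule K := by
    by_contra hne
    exact hK.2 _ inf_le_left (conductor_mul_mem K a) hne htop
  have h1I : (1 : A) ∈ conductor K a := hI ▸ K.one_mem
  simpa using h1I.2

end Subalgebra

end Descent

section Galois

variable {k HH A : Type u} [Field k] [Ring HH] [Algebra k HH] [Ring A] [Algebra k A]
  {gH : SuperHopf k HH} {gA : SuperRing k A} {C : SuperComodAlg k HH A gH gA}
  {K : Subalgebra k A}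

@[simp]
lemma XiLin_tmul (x y : A) : XiLin C (x ⊗ₜ[k] y) = (x ⊗ₜ[k] 1) * C.coact y := by
  simp [XiLin]

lemma XiLin_tmul_one (x : A) : XiLin C (x ⊗ₜ[k] 1) = x ⊗ₜ[k] 1 := by
  simp [C.coact_one]

lemma XiLin_one_tmul (y : A) : XiLin C (1 ⊗ₜ[k] y) = C.coact y := by
  simp [← Algebra.TensorProduct.one_def]

lemma coact_eq_tmul_one_of_mem (hXi : ker (XiLin C) = relK K) {c : A} (hc : c ∈ K) :
    C.coact c = c ⊗ₜ[k] 1 := by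
  have h : (1 * c) ⊗ₜ[k] (1 : A) - 1 ⊗ₜ[k] (c * 1) ∈ ker (XiLin C) :=
    hXi ▸ Submodule.subset_span ⟨1, 1, c, hc, rfl⟩
  rw [one_mul, mul_one, mem_ker, map_sub, XiLin_tmul_one, XiLin_one_tmul, sub_eq_zero] at h
  exact h.symm

lemma one_tmul_sub_tmul_one_mem_relK (hXi : ker (XiLin C) = relK K) {a : A}
    (ha : a ∈ C.coinvariants) : (1 : A) ⊗ₜ[k] a - a ⊗ₜ[k] 1 ∈ relK K := by
  rw [← hXi, mem_ker, map_sub, XiLin_one_tmul, XiLin_tmul_one, ha, sub_self]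

end Galois

theorem stmt18_general {k HH A : Type u} [Field k] [Ring HH] [Algebra k HH]
    [Ring A] [Algebra k A]
    (gH : SuperHopf k HH)
    (gA : SuperRing k A)
    (C : SuperComodAlg k HH A gH gA)
    (K : Subalgebra k A)
    -- `Ξ_A` induces an isomorphism `A ⊗_K A ≅ A ⊗ H`
    (hXiker : LinearMap.ker (XiLin C) = relK K)
    -- `A` is faithfully flat over `K`, or `K` is self-injective
    (hyp : FaithfullyFlatOver K ∨ Module.Injective ↥K ↥K) :
    (K : Set A) = C.coinvariants := by
  ext a
  refine ⟨coact_eq_tmul_one_of_mem hXiker, fun ha => ?_⟩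
  have hrel := one_tmul_sub_tmul_one_mem_relK hXiker ha
  rcases hyp with hff | hinj
  · exact K.mem_of_one_tmul_sub_mem_relK_of_faithfullyFlatOver a hff hrel
  · exact mem_of_one_tmul_sub_mem_relK_of_injective K hinj hrel

theorem stmt18 {k HH A : Type u} [Field k] [CharZero k] [Ring HH] [Algebra k HH]
    [Ring A] [Algebra k A]
    (gH : SuperHopf k HH) (hgH : gH.toSuperRing.SuperComm)
    (gA : SuperRing k A) (hgA : gA.SuperComm)
    (C : SuperComodAlg k HH A gH gA)
    (K : Subalgebra k A)
    -- `K` is a sub-superalgebra (homogeneous)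
    (hKhom : Subalgebra.toSubmodule K =
      (Subalgebra.toSubmodule K ⊓ gA.grade 0) ⊔ (Subalgebra.toSubmodule K ⊓ gA.grade 1))
    -- `Ξ_A` induces an isomorphism `A ⊗_K A ≅ A ⊗ H`
    (hXisurj : Function.Surjective (XiLin C))
    (hXiker : LinearMap.ker (XiLin C) = relK K)
    -- `A` is faithfully flat over `K`, or `K` is self-injective
    (hyp : FaithfullyFlatOver K ∨ Module.Injective ↥K ↥K) :
    (K : Set A) = C.coinvariants :=
  stmt18_general gH gA C K hXiker hyp
end
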